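/- arXiv:1410.1014 — 10 statements merged into one kernel-verified Lean document; each statement's English description precedes it below -/
import Mathlib

section
/- Let m be a natural number, r > 0, and let f and g be analytic functions on the punctured disc Δ_r \ {0}. Suppose there exist s ∈ (0, min(r,1)) and an analytic function V on Δ_s × Δ_s ⊆ ℂ² such that for all (z₁,z₂) with 0<|z₁|<s and |z₂|<s one has 0 < |z₁·(1+z₁^m·z₂)| < r and f(z₁) + g(z₁·(1+z₁^m·z₂)) = V(z₁,z₂). Then the functions z ↦ z^m·f(z) and z ↦ z^m·g(z), defined on Δ_r \ {0}, extend analytically across 0; that is, f and g are meromorphic at 0 with poles of order at most m. -/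
/-!
Differentiating `f z + g (z + z ^ (m + 1) * w) = V (z, w)` in `w` at `w = 0` shows that
`z ^ (m + 1) * g' z` is the holomorphic function `z ↦ ∂V/∂w (z, 0)`, so it is bounded near `0`.
The mean value inequality along radii then bounds `z ^ (m + 1) * g z`, so `g` is meromorphic
at `0`. A pole of `g` of order `k > m` would give `g'` a pole of order `k + 1 > m + 1`; hence
`z ^ m * g z` extends holomorphically across `0`, and so does
`z ^ m * f z = z ^ m * V (z, 0) - z ^ m * g z`.
-/

open Complex Metric Set Filter Function Asymptotics
open scoped Topology

theorem pow_succ_mul_deriv_eq_fderiv_of_eventually_add_eq {f g : ℂ → ℂ} {V : ℂ × ℂ → ℂ} {m : ℕ}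
    {z : ℂ} (hg : DifferentiableAt ℂ g z) (hV : DifferentiableAt ℂ V (z, 0))
    (hrel : ∀ᶠ w in 𝓝 0, f z + g (z * (1 + z ^ m * w)) = V (z, w)) :
    z ^ (m + 1) * deriv g z = fderiv ℂ V (z, 0) (0, 1) := by
  have hinner : HasDerivAt (fun w : ℂ => z * (1 + z ^ m * w)) (z ^ (m + 1)) 0 := by
    simpa [pow_succ'] using ((hasDerivAt_id (0 : ℂ)).const_mul (z ^ m)).const_add 1 |>.const_mul z
  have hleft : HasDerivAt (fun w => g (z * (1 + z ^ m * w))) (deriv g z * z ^ (m + 1)) 0 :=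
    hg.hasDerivAt.comp_of_eq 0 hinner (by simp)
  have hright : HasDerivAt (fun w => V (z, w) - f z) (fderiv ℂ V (z, 0) (0, 1)) 0 :=
    (hV.hasFDerivAt.comp_hasDerivAt 0 ((hasDerivAt_const 0 z).prodMk (hasDerivAt_id 0))).sub_const _
  rw [mul_comm]
  exact hleft.unique (hright.congr_of_eventuallyEq (hrel.mono fun w hw => by simp [← hw]))

theorem norm_pow_mul_le_of_norm_pow_mul_deriv_le {g : ℂ → ℂ} {n : ℕ} {a C K : ℝ} {z : ℂ}
    (hz : 0 < ‖z‖) (hza : ‖z‖ ≤ a)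
    (hg : ∀ w : ℂ, ‖z‖ ≤ ‖w‖ → ‖w‖ ≤ a → DifferentiableAt ℂ g w)
    (hd : ∀ w : ℂ, ‖z‖ ≤ ‖w‖ → ‖w‖ ≤ a → ‖w ^ n * deriv g w‖ ≤ C)
    (hK : ∀ w : ℂ, ‖w‖ = a → ‖g w‖ ≤ K) :
    ‖z ^ n * g z‖ ≤ a ^ n * K + C * a := by
  set u : ℂ := z / ‖z‖
  have hu : ‖u‖ = 1 := by simp [u, hz.ne']
  have hnorm : ∀ t : ℝ, 0 ≤ t → ‖(t : ℂ) * u‖ = t := fun t ht => by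
    simp [hu, abs_of_nonneg ht]
  have hzu : ((‖z‖ : ℝ) : ℂ) * u = z := by
    simp only [u]; field_simp [ofReal_ne_zero.mpr hz.ne']
  -- mean value inequality for `t ↦ z ^ n * g (t * u)` on the radius `[‖z‖, a]` through `z`
  have hderiv : ∀ t ∈ Icc ‖z‖ a, HasDerivWithinAt (fun t : ℝ => z ^ n * g (t * u))
      (z ^ n * (deriv g (t * u) * u)) (Icc ‖z‖ a) t := by
    intro t ht
    have ht0 : 0 ≤ t := hz.le.trans ht.1
    have hgt :=
      (hg _ (by rw [hnorm t ht0]; exact ht.1) (by rw [hnorm t ht0]; exact ht.2)).hasDerivAt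
    have hline : HasDerivAt (fun w : ℂ => w * u) u t := by
      simpa using (hasDerivAt_id (t : ℂ)).mul_const u
    exact ((hgt.comp (t : ℂ) hline).comp_ofReal.const_mul (z ^ n)).hasDerivWithinAt
  have hbound : ∀ t ∈ Ico ‖z‖ a, ‖z ^ n * (deriv g (t * u) * u)‖ ≤ C := by
    intro t ht
    have ht0 : 0 ≤ t := hz.le.trans ht.1
    calc ‖z ^ n * (deriv g (t * u) * u)‖ = ‖z‖ ^ n * ‖deriv g (t * u)‖ := by simp [hu]
      _ ≤ t ^ n * ‖deriv g (t * u)‖ := by gcongr; exact ht.1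
      _ = ‖((t : ℂ) * u) ^ n * deriv g (t * u)‖ := by simp [hu, abs_of_nonneg ht0]
      _ ≤ C := hd _ (by rw [hnorm t ht0]; exact ht.1) (by rw [hnorm t ht0]; exact ht.2.le)
  have hC : 0 ≤ C := (norm_nonneg _).trans (hd z le_rfl hza)
  have hmvt := norm_image_sub_le_of_norm_deriv_le_segment' hderiv hbound a ⟨hza, le_rfl⟩
  have hend : ‖z ^ n * g ((a : ℂ) * u)‖ ≤ a ^ n * K := by
    rw [norm_mul, norm_pow]
    exact mul_le_mul (pow_le_pow_left₀ hz.le hza n) (hK _ (hnorm a (hz.le.trans hza)))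
      (norm_nonneg _) (pow_nonneg (hz.le.trans hza) n)
  simp only [hzu] at hmvt
  calc ‖z ^ n * g z‖ ≤ ‖z ^ n * g ((a : ℂ) * u)‖ + ‖z ^ n * g ((a : ℂ) * u) - z ^ n * g z‖ :=
        norm_le_insert _ _
    _ ≤ a ^ n * K + C * a := by linarith [mul_nonneg hC hz.le]

theorem isBigO_pow_mul_of_isBigO_pow_mul_deriv {g : ℂ → ℂ} {n : ℕ}
    (hg : ∀ᶠ z in 𝓝[≠] 0, DifferentiableAt ℂ g z)
    (hd : (fun z => z ^ n * deriv g z) =O[𝓝[≠] 0] (fun _ => (1 : ℂ))) :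
    (fun z => z ^ n * g z) =O[𝓝[≠] 0] (fun _ => (1 : ℂ)) := by
  obtain ⟨C, hC⟩ := hd.bound
  obtain ⟨b, hb, hball⟩ := Metric.eventually_nhds_iff_ball.mp
    (eventually_nhdsWithin_iff.mp (hg.and hC))
  have hb2 : 0 < b / 2 := half_pos hb
  have hmem : ∀ w : ℂ, 0 < ‖w‖ → ‖w‖ ≤ b / 2 →
      DifferentiableAt ℂ g w ∧ ‖w ^ n * deriv g w‖ ≤ C := fun w h0 h1 => by
    simpa using hball w (by rw [mem_ball_zero_iff]; linarith) (norm_pos_iff.mp h0)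
  obtain ⟨K, hK⟩ := (isCompact_sphere (0 : ℂ) (b / 2)).exists_bound_of_continuousOn
    fun w hw => (hmem w (by simp_all) (by simp_all)).1.continuousAt.continuousWithinAt
  refine IsBigO.of_bound ((b / 2) ^ n * K + C * (b / 2)) ?_
  filter_upwards [inter_mem_nhdsWithin _ (ball_mem_nhds (0 : ℂ) hb2)] with z ⟨hz0, hz⟩
  have hzpos : 0 < ‖z‖ := norm_pos_iff.mpr hz0
  simp only [mem_ball, dist_zero_right] at hz
  simpa using norm_pow_mul_le_of_norm_pow_mul_deriv_le hzpos hz.le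
    (fun w h0 h1 => (hmem w (hzpos.trans_le h0) h1).1)
    (fun w h0 h1 => (hmem w (hzpos.trans_le h0) h1).2)
    (fun w hw => hK w (by simpa using hw))

theorem meromorphicAt_of_isBigO_pow_mul {g : ℂ → ℂ} {n : ℕ}
    (hg : ∀ᶠ z in 𝓝[≠] 0, DifferentiableAt ℂ g z)
    (hb : (fun z => z ^ n * g z) =O[𝓝[≠] 0] (fun _ => (1 : ℂ))) :
    MeromorphicAt g 0 := by
  refine ⟨n + 1, analyticAt_of_differentiable_on_punctured_nhds_of_continuousAt
    (hg.mono fun z hz => by fun_prop) ?_⟩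
  rw [continuousAt_iff_punctured_nhds]
  have hbig : (fun z : ℂ => (z - 0) ^ (n + 1) • g z) =O[𝓝[≠] 0] fun z => z * 1 := by
    simpa [pow_succ', mul_assoc] using (isBigO_refl (fun z : ℂ => z) _).mul hb
  have hid : Tendsto (fun z : ℂ => z * 1) (𝓝[≠] 0) (𝓝 0) := by
    simp only [mul_one]
    exact tendsto_nhdsWithin_of_tendsto_nhds tendsto_id
  simpa using hbig.trans_tendsto hid

theorem meromorphicOrderAt_pow_id (n : ℕ) : meromorphicOrderAt (fun z : ℂ => z ^ n) 0 = n := by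
  simpa using fun_meromorphicOrderAt_pow_id_sub_const (x := (0 : ℂ)) (n := n)

theorem neg_le_meromorphicOrderAt_of_pow_succ_mul_deriv {g ψ : ℂ → ℂ} {n : ℕ}
    (hg : MeromorphicAt g 0) (hψ : AnalyticAt ℂ ψ 0)
    (h : (fun z => z ^ (n + 1) * deriv g z) =ᶠ[𝓝[≠] 0] ψ) :
    -(n : ℤ) ≤ meromorphicOrderAt g 0 := by
  cases ho : meromorphicOrderAt g 0 with
  | top => exact le_top
  | coe k =>
    by_contra! hk
    norm_cast at hk
    have hk0 : (k : ℂ) ≠ 0 := Int.cast_ne_zero.mpr (by omega)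
    have hnonneg : 0 ≤ meromorphicOrderAt (fun z => z ^ (n + 1) * deriv g z) 0 := by
      rw [meromorphicOrderAt_congr h]; exact hψ.meromorphicOrderAt_nonneg
    rw [fun_meromorphicOrderAt_mul (by fun_prop) hg.deriv, meromorphicOrderAt_pow_id,
      meromorphicOrderAt_deriv_eq_sub_one hk0 ho] at hnonneg
    norm_cast at hnonneg
    omega

theorem MeromorphicAt.exists_analyticAt_eventuallyEq_pow_mul {g : ℂ → ℂ} {n : ℕ}
    (hg : MeromorphicAt g 0) (hn : -(n : ℤ) ≤ meromorphicOrderAt g 0) :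
    ∃ G : ℂ → ℂ, AnalyticAt ℂ G 0 ∧ (fun z => z ^ n * g z) =ᶠ[𝓝[≠] 0] G := by
  have hmero : MeromorphicAt (fun z => z ^ n * g z) 0 := by fun_prop
  refine hmero.meromorphicOrderAt_nonneg_iff.mp ?_
  rw [fun_meromorphicOrderAt_mul (by fun_prop) hg, meromorphicOrderAt_pow_id]
  cases ho : meromorphicOrderAt g 0 with
  | top => simp
  | coe k =>
    rw [ho] at hn
    norm_cast at hn ⊢
    omega

theorem exists_analyticAt_eventuallyEq_pow_mul_of_pow_succ_mul_deriv {g ψ : ℂ → ℂ} {n : ℕ}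
    (hg : ∀ᶠ z in 𝓝[≠] 0, DifferentiableAt ℂ g z) (hψ : AnalyticAt ℂ ψ 0)
    (h : (fun z => z ^ (n + 1) * deriv g z) =ᶠ[𝓝[≠] 0] ψ) :
    ∃ G : ℂ → ℂ, AnalyticAt ℂ G 0 ∧ (fun z => z ^ n * g z) =ᶠ[𝓝[≠] 0] G := by
  have hbdd : (fun z => z ^ (n + 1) * deriv g z) =O[𝓝[≠] 0] (fun _ => (1 : ℂ)) :=
    h.trans_isBigO ((hψ.continuousAt.tendsto.mono_left nhdsWithin_le_nhds).isBigO_one ℂ)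
  have hmero : MeromorphicAt g 0 :=
    meromorphicAt_of_isBigO_pow_mul hg (isBigO_pow_mul_of_isBigO_pow_mul_deriv hg hbdd)
  exact hmero.exists_analyticAt_eventuallyEq_pow_mul
    (neg_le_meromorphicOrderAt_of_pow_succ_mul_deriv hmero hψ h)

theorem AnalyticOnNhd.update_of_eventuallyEq_nhdsNE {𝕜 E : Type*} [NontriviallyNormedField 𝕜]
    [NormedAddCommGroup E] [NormedSpace 𝕜 E] [DecidableEq 𝕜] {ψ Φ : 𝕜 → E} {U : Set 𝕜} {c : 𝕜}
    (hψ : AnalyticOnNhd 𝕜 ψ (U \ {c})) (hΦ : AnalyticAt 𝕜 Φ c) (h : ψ =ᶠ[𝓝[≠] c] Φ) :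
    AnalyticOnNhd 𝕜 (update ψ c (Φ c)) U := by
  intro z hz
  rcases eq_or_ne z c with rfl | hzc
  · refine hΦ.congr (eventuallyEq_nhds_of_eventuallyEq_nhdsNE ?_ (by simp)).symm
    exact (update_eventuallyEq_nhdsNE ψ z z _).trans h
  · refine (hψ z ⟨hz, hzc⟩).congr ?_
    filter_upwards [isOpen_ne.mem_nhds hzc] with w hw
    rw [update_of_ne hw]

theorem exists_analyticOnNhd_eq_pow_mul_of_eventuallyEq {φ Φ : ℂ → ℂ} {m : ℕ} {r : ℝ}
    (hφ : AnalyticOnNhd ℂ φ {z : ℂ | 0 < ‖z‖ ∧ ‖z‖ < r}) (hΦ : AnalyticAt ℂ Φ 0)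
    (h : (fun z => z ^ m * φ z) =ᶠ[𝓝[≠] 0] Φ) :
    ∃ F : ℂ → ℂ, AnalyticOnNhd ℂ F {z : ℂ | ‖z‖ < r} ∧
      ∀ z : ℂ, 0 < ‖z‖ → ‖z‖ < r → F z = z ^ m * φ z :=
  ⟨update (fun z => z ^ m * φ z) 0 (Φ 0),
    AnalyticOnNhd.update_of_eventuallyEq_nhdsNE
      (fun z hz => (analyticAt_id.pow m).mul (hφ z ⟨norm_pos_iff.mpr hz.2, hz.1⟩)) hΦ h,
    fun _ hz _ => update_of_ne (norm_pos_iff.mp hz) _ _⟩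

theorem pole_bound_of_holomorphic_sum_general
    (m : ℕ) (r : ℝ) (f g : ℂ → ℂ)
    (hf : AnalyticOnNhd ℂ f {z : ℂ | 0 < ‖z‖ ∧ ‖z‖ < r})
    (hg : AnalyticOnNhd ℂ g {z : ℂ | 0 < ‖z‖ ∧ ‖z‖ < r})
    (hsum : ∃ s : ℝ, 0 < s ∧ s < min r 1 ∧
      ∃ V : ℂ × ℂ → ℂ,
        AnalyticOnNhd ℂ V {p : ℂ × ℂ | ‖p.1‖ < s ∧ ‖p.2‖ < s} ∧
        ∀ z₁ z₂ : ℂ, 0 < ‖z₁‖ → ‖z₁‖ < s → ‖z₂‖ < s →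
          (0 < ‖z₁ * (1 + z₁ ^ m * z₂)‖ ∧
            ‖z₁ * (1 + z₁ ^ m * z₂)‖ < r) ∧
          f z₁ + g (z₁ * (1 + z₁ ^ m * z₂)) = V (z₁, z₂)) :
    (∃ F : ℂ → ℂ,
        AnalyticOnNhd ℂ F {z : ℂ | ‖z‖ < r} ∧
        ∀ z : ℂ, 0 < ‖z‖ → ‖z‖ < r → F z = z ^ m * f z) ∧
    (∃ G : ℂ → ℂ,
        AnalyticOnNhd ℂ G {z : ℂ | ‖z‖ < r} ∧
        ∀ z : ℂ, 0 < ‖z‖ → ‖z‖ < r → G z = z ^ m * g z) := by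
  obtain ⟨s, hs0, hsmin, V, hV, hrel⟩ := hsum
  have hsr : s < r := hsmin.trans_le (min_le_left _ _)
  have hV0 : AnalyticAt ℂ V (0, 0) := hV _ (by simpa using hs0)
  have hnear : ∀ᶠ z in 𝓝[≠] (0 : ℂ), 0 < ‖z‖ ∧ ‖z‖ < s := by
    filter_upwards [self_mem_nhdsWithin, mem_nhdsWithin_of_mem_nhds (ball_mem_nhds 0 hs0)]
      with z hz0 hzs
    exact ⟨norm_pos_iff.mpr hz0, by simpa using hzs⟩
  have hderiv : (fun z => z ^ (m + 1) * deriv g z) =ᶠ[𝓝[≠] 0]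
      fun z => fderiv ℂ V (z, 0) (0, 1) := by
    filter_upwards [hnear] with z hz
    refine pow_succ_mul_deriv_eq_fderiv_of_eventually_add_eq (f := f)
      (hg z ⟨hz.1, hz.2.trans hsr⟩).differentiableAt
      (hV (z, 0) ⟨hz.2, by simpa using hs0⟩).differentiableAt ?_
    filter_upwards [ball_mem_nhds 0 hs0] with w hw
    exact (hrel z w hz.1 hz.2 (by simpa using hw)).2
  obtain ⟨G, hG, hgG⟩ := exists_analyticAt_eventuallyEq_pow_mul_of_pow_succ_mul_deriv
    (hnear.mono fun z hz => (hg z ⟨hz.1, hz.2.trans hsr⟩).differentiableAt)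
    (((ContinuousLinearMap.apply ℂ ℂ ((0 : ℂ), (1 : ℂ))).analyticAt _).comp
      (hV0.fderiv.comp (f := fun z : ℂ => (z, (0 : ℂ))) (by fun_prop))) hderiv
  have hfG : (fun z => z ^ m * f z) =ᶠ[𝓝[≠] 0] fun z => z ^ m * V (z, 0) - G z := by
    filter_upwards [hnear, hgG] with z hz hzG
    rw [← hzG, ← (hrel z 0 hz.1 hz.2 (by simpa using hs0)).2]
    simp only [mul_zero, add_zero, mul_one]
    ring
  refine ⟨exists_analyticOnNhd_eq_pow_mul_of_eventuallyEq hf ?_ hfG,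
    exists_analyticOnNhd_eq_pow_mul_of_eventuallyEq hg hG hgG⟩
  exact ((analyticAt_id.pow m).mul (hV0.comp (f := fun z : ℂ => (z, (0 : ℂ))) (by fun_prop))).sub hG

/-- **Pole bound for the exponents of a closed decomposition.**
If `f` and `g` are analytic on the punctured disc `Δ_r \ {0}` and the sum
`f(z₁) + g(z₁(1+z₁^m z₂))` agrees with a function `V` analytic on a full bidisc
`Δ_s × Δ_s` (for some `0 < s < min r 1`), then `z ↦ z^m f(z)` and `z ↦ z^m g(z)`
extend analytically across `0`; i.e. `f` and `g` have poles of order at most `m` at `0`. -/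
theorem pole_bound_of_holomorphic_sum
    (m : ℕ) (r : ℝ) (hr : 0 < r) (f g : ℂ → ℂ)
    (hf : AnalyticOnNhd ℂ f {z : ℂ | 0 < ‖z‖ ∧ ‖z‖ < r})
    (hg : AnalyticOnNhd ℂ g {z : ℂ | 0 < ‖z‖ ∧ ‖z‖ < r})
    (hsum : ∃ s : ℝ, 0 < s ∧ s < min r 1 ∧
      ∃ V : ℂ × ℂ → ℂ,
        AnalyticOnNhd ℂ V {p : ℂ × ℂ | ‖p.1‖ < s ∧ ‖p.2‖ < s} ∧
        ∀ z₁ z₂ : ℂ, 0 < ‖z₁‖ → ‖z₁‖ < s → ‖z₂‖ < s →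
          (0 < ‖z₁ * (1 + z₁ ^ m * z₂)‖ ∧
            ‖z₁ * (1 + z₁ ^ m * z₂)‖ < r) ∧
          f z₁ + g (z₁ * (1 + z₁ ^ m * z₂)) = V (z₁, z₂)) :
    (∃ F : ℂ → ℂ,
        AnalyticOnNhd ℂ F {z : ℂ | ‖z‖ < r} ∧
        ∀ z : ℂ, 0 < ‖z‖ → ‖z‖ < r → F z = z ^ m * f z) ∧
    (∃ G : ℂ → ℂ,
        AnalyticOnNhd ℂ G {z : ℂ | ‖z‖ < r} ∧
        ∀ z : ℂ, 0 < ‖z‖ → ‖z‖ < r → G z = z ^ m * g z) :=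
  pole_bound_of_holomorphic_sum_general m r f g hf hg hsum
end

section
/- Let r > 0 and let f̂ and ĝ be analytic nowhere-vanishing functions on the punctured disc Δ_r \ {0} ⊆ ℂ. Suppose the function z ↦ f̂(z)·ĝ(z) extends to an analytic nowhere-vanishing function on the full disc Δ_r. Then there exist an integer k and analytic functions f and g on Δ_r \ {0} such that f̂(z) = z^k·exp(f(z)) and ĝ(z) = z^{-k}·exp(g(z)) for all z with 0 < |z| < r. -/
/-!
Pull `f̂` back along `exp` to `H = exp⁻¹(Δ_r \ {0})`, a left half-plane. `H` is convex, so
`f̂ ∘ exp` has a holomorphic logarithm `L` there. Since `f̂ ∘ exp` is `2πi`-periodic, `L(w + 2πi)`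
and `L(w)` are logarithms of the same function on a connected set, hence differ by a constant
`2πik`; thus `L(w) - kw` is `2πi`-periodic and descends through `exp` to `f` with `f̂ = z^k e^f`.
Finally `f̂ ĝ` has a logarithm `Q` on the whole disc, and `ĝ = z^{-k} e^{Q - f}`.
-/

open Complex Set Filter Topology Function
open scoped Real

theorem ContinuousAt.differentiableAt_of_exp_eventuallyEq {L g : ℂ → ℂ} {x : ℂ}
    (hL : ContinuousAt L x) (hg : DifferentiableAt ℂ g x)
    (hexp : ∀ᶠ y in 𝓝 x, exp (L y) = g y) : DifferentiableAt ℂ L x := by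
  have hgx : g x ≠ 0 := hexp.self_of_nhds ▸ exp_ne_zero _
  -- near `x`, `L - L x` stays in the strip `|Im| < π` on which `log` inverts `exp`
  have him : ∀ᶠ y in 𝓝 x, (L y - L x).im ∈ Ioo (-π) π := by
    have : ContinuousAt (fun y => (L y - L x).im) x := by fun_prop
    exact this.eventually (Ioo_mem_nhds (by simp [Real.pi_pos]) (by simp [Real.pi_pos]))
  have hloc : (fun y => L x + Complex.log (g y / g x)) =ᶠ[𝓝 x] L := by
    filter_upwards [him, hexp] with y hy hexpy
    rw [← hexpy, ← hexp.self_of_nhds, ← exp_sub, log_exp hy.1 hy.2.le]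
    ring
  refine DifferentiableAt.congr_of_eventuallyEq ?_ hloc.symm
  refine (differentiableAt_const _).add ((differentiableAt_log ?_).comp x (hg.div_const _))
  simp [hgx]

theorem Convex.isSimplyConnected {E : Type*} [AddCommGroup E] [Module ℝ E] [TopologicalSpace E]
    [ContinuousAdd E] [ContinuousSMul ℝ E] {U : Set E} (hU : Convex ℝ U) (hne : U.Nonempty) :
    IsSimplyConnected U := by
  have := hU.contractibleSpace hne
  show SimplyConnectedSpace U
  infer_instance

theorem Convex.exists_differentiableOn_eqOn_exp_comp {U : Set ℂ} (hU : Convex ℝ U)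
    (hUo : IsOpen U) {g : ℂ → ℂ} (hg : DifferentiableOn ℂ g U) (hg0 : ∀ z ∈ U, g z ≠ 0) :
    ∃ L : ℂ → ℂ, DifferentiableOn ℂ L U ∧ EqOn (exp ∘ L) g U := by
  rcases U.eq_empty_or_nonempty with rfl | hne
  · exact ⟨0, differentiableOn_empty, eqOn_empty _ _⟩
  obtain ⟨L, hLc, hL⟩ := exists_continuousOn_eqOn_exp_comp (hU.isSimplyConnected hne) hUo
    hg.continuousOn fun ⟨z, hz, hz0⟩ => hg0 z hz hz0
  refine ⟨L, fun x hx => DifferentiableAt.differentiableWithinAt ?_, hL⟩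
  refine (hLc.continuousAt (hUo.mem_nhds hx)).differentiableAt_of_exp_eventuallyEq
    (hg.differentiableAt (hUo.mem_nhds hx)) ?_
  filter_upwards [hUo.mem_nhds hx] with y hy using hL hy

theorem Complex.isDiscrete_range_intCast : IsDiscrete (range ((↑) : ℤ → ℂ)) := by
  have := (isometry_ofReal.isEmbedding.isInducing.comp
    Int.isClosedEmbedding_coe_real.isInducing).isDiscrete_range
  simpa [Function.comp_def] using this

theorem IsPreconnected.exists_int_eq_add_of_exp_comp_eqOn {X : Type*} [TopologicalSpace X]
    {U : Set X} (hU : IsPreconnected U) {L₁ L₂ : X → ℂ} (h₁ : ContinuousOn L₁ U)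
    (h₂ : ContinuousOn L₂ U) (h : EqOn (exp ∘ L₁) (exp ∘ L₂) U) :
    ∃ n : ℤ, ∀ w ∈ U, L₁ w = L₂ w + n * (2 * π * I) := by
  have hdiv : ∀ w ∈ U, ∃ n : ℤ, (L₁ w - L₂ w) / (2 * π * I) = n := fun w hw => by
    obtain ⟨n, hn⟩ := exp_eq_exp_iff_exists_int.1 (h hw)
    exact ⟨n, by rw [hn, add_sub_cancel_left, mul_div_cancel_right₀ _ two_pi_I_ne_zero]⟩
  rcases U.eq_empty_or_nonempty with rfl | ⟨w₀, hw₀⟩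
  · exact ⟨0, by simp⟩
  obtain ⟨n, hn⟩ := hdiv w₀ hw₀
  refine ⟨n, fun w hw => ?_⟩
  have hconst := hU.constant_of_mapsTo isDiscrete_range_intCast
    ((h₁.sub h₂).div_const _) (fun w hw => (hdiv w hw).imp fun _ h => h.symm) hw hw₀
  rw [Pi.sub_apply, Pi.sub_apply, hn, div_eq_iff two_pi_I_ne_zero] at hconst
  linear_combination hconst

theorem Function.Periodic.differentiableAt_comp_log {F : ℂ → ℂ} (hF : Periodic F (2 * π * I))
    {z : ℂ} (hz : z ≠ 0) (hd : DifferentiableAt ℂ F (log z)) :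
    DifferentiableAt ℂ (fun y => F (log y)) z := by
  -- a branch of the logarithm that is holomorphic near `z`, wherever `z` lies
  set ℓ : ℂ → ℂ := fun y => log (y / z) + log z
  have hℓ : DifferentiableAt ℂ ℓ z :=
    ((differentiableAt_log (by simp [hz])).comp z (differentiableAt_id.div_const z)).add_const _
  have hℓz : ℓ z = log z := by simp [ℓ, hz]
  have heq : (fun y => F (ℓ y)) =ᶠ[𝓝 z] fun y => F (log y) := by
    filter_upwards [isOpen_ne.mem_nhds hz] with y hy
    obtain ⟨n, hn⟩ := exp_eq_exp_iff_exists_int.1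
      (show exp (log y) = exp (ℓ y) by simp [ℓ, exp_add, exp_log, hy, hz])
    rw [hn, hF.int_mul n]
  exact ((hℓz ▸ hd).comp z hℓ).congr_of_eventuallyEq heq.symm

def annulus (a b : ℝ) : Set ℂ := {z | a < ‖z‖ ∧ ‖z‖ < b}

theorem isOpen_annulus (a b : ℝ) : IsOpen (annulus a b) :=
  (isOpen_lt continuous_const continuous_norm).inter (isOpen_lt continuous_norm continuous_const)

theorem ne_zero_of_mem_annulus {a b : ℝ} (ha : 0 ≤ a) {z : ℂ} (hz : z ∈ annulus a b) : z ≠ 0 :=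
  norm_pos_iff.1 (ha.trans_lt hz.1)

theorem convex_preimage_exp_annulus (a b : ℝ) : Convex ℝ (exp ⁻¹' annulus a b) := by
  have : exp ⁻¹' annulus a b = reLm ⁻¹' (Real.exp ⁻¹' Ioo a b) := by
    ext w
    simp [annulus, norm_exp]
  rw [this]
  exact (ordConnected_Ioo.preimage_mono Real.exp_monotone).convex.linear_preimage reLm

theorem exists_zpow_mul_exp_of_annulus {a b : ℝ} (ha : 0 ≤ a) {h : ℂ → ℂ}
    (hd : DifferentiableOn ℂ h (annulus a b)) (h0 : ∀ z ∈ annulus a b, h z ≠ 0) :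
    ∃ k : ℤ, ∃ f : ℂ → ℂ, DifferentiableOn ℂ f (annulus a b) ∧
      ∀ z ∈ annulus a b, h z = z ^ k * exp (f z) := by
  classical
  set H := exp ⁻¹' annulus a b
  have hHc : Convex ℝ H := convex_preimage_exp_annulus a b
  have hHo : IsOpen H := (isOpen_annulus a b).preimage continuous_exp
  have hHT : ∀ w, w + 2 * π * I ∈ H ↔ w ∈ H := fun w => by simp [H, exp_periodic w]
  obtain ⟨L, hLd, hL⟩ := hHc.exists_differentiableOn_eqOn_exp_comp hHo
    (hd.comp differentiable_exp.differentiableOn (mapsTo_preimage _ _)) fun w hw => h0 _ hw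
  obtain ⟨k, hk⟩ := hHc.isPreconnected.exists_int_eq_add_of_exp_comp_eqOn
    (L₁ := fun w => L (w + 2 * π * I)) (L₂ := L)
    (hLd.continuousOn.comp (continuous_add_const _).continuousOn fun w hw => (hHT w).2 hw)
    hLd.continuousOn fun w hw =>
      (hL ((hHT w).2 hw)).trans ((congrArg h (exp_periodic w)).trans (hL hw).symm)
  -- extended by `0` off `H`, so that it is periodic on all of `ℂ`
  set F : ℂ → ℂ := H.piecewise (fun w => L w - k * w) 0
  have hFH : ∀ w ∈ H, F w = L w - k * w := fun w hw => piecewise_eq_of_mem H _ _ hw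
  have hF0 : ∀ w ∉ H, F w = 0 := fun w hw => piecewise_eq_of_notMem H _ _ hw
  have hFper : Periodic F (2 * π * I) := fun w => by
    by_cases hw : w ∈ H
    · rw [hFH _ ((hHT w).2 hw), hFH w hw, hk w hw]
      ring
    · rw [hF0 _ (mt (hHT w).1 hw), hF0 w hw]
  have hFd : ∀ w ∈ H, DifferentiableAt ℂ F w := fun w hw =>
    ((hLd.differentiableAt (hHo.mem_nhds hw)).sub
      (differentiableAt_id.const_mul _)).congr_of_eventuallyEq
      (eventually_of_mem (hHo.mem_nhds hw) hFH)
  have hlog : ∀ z ∈ annulus a b, log z ∈ H := fun z hz => by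
    simpa [H, exp_log (ne_zero_of_mem_annulus ha hz)] using hz
  refine ⟨k, fun z => F (log z), fun z hz => ?_, fun z hz => ?_⟩
  · exact (hFper.differentiableAt_comp_log (ne_zero_of_mem_annulus ha hz)
      (hFd _ (hlog z hz))).differentiableWithinAt
  · have hz0 := ne_zero_of_mem_annulus ha hz
    have hLz : exp (L (log z)) = h z := by simpa [exp_log hz0] using hL (hlog z hz)
    have hzk : z ^ k = exp (k * log z) := by rw [exp_int_mul, exp_log hz0]
    show h z = z ^ k * exp (F (log z))
    rw [← hLz, hzk, ← exp_add, hFH _ (hlog z hz)]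
    ring_nf

theorem winding_number_cancellation_general
    (r : ℝ) (fh gh : ℂ → ℂ)
    (hfh : AnalyticOnNhd ℂ fh {z : ℂ | 0 < ‖z‖ ∧ ‖z‖ < r})
    (hfh0 : ∀ z : ℂ, 0 < ‖z‖ → ‖z‖ < r → fh z ≠ 0)
    (hext : ∃ P : ℂ → ℂ,
      AnalyticOnNhd ℂ P {z : ℂ | ‖z‖ < r} ∧
      (∀ z : ℂ, ‖z‖ < r → P z ≠ 0) ∧
      (∀ z : ℂ, 0 < ‖z‖ → ‖z‖ < r → P z = fh z * gh z)) :
    ∃ k : ℤ, ∃ f g : ℂ → ℂ,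
      AnalyticOnNhd ℂ f {z : ℂ | 0 < ‖z‖ ∧ ‖z‖ < r} ∧
      AnalyticOnNhd ℂ g {z : ℂ | 0 < ‖z‖ ∧ ‖z‖ < r} ∧
      (∀ z : ℂ, 0 < ‖z‖ → ‖z‖ < r →
        fh z = z ^ k * Complex.exp (f z) ∧ gh z = z ^ (-k) * Complex.exp (g z)) := by
  obtain ⟨P, hP, hP0, hPfg⟩ := hext
  obtain ⟨k, f, hf, hfh_eq⟩ := exists_zpow_mul_exp_of_annulus le_rfl hfh.differentiableOn
    fun z hz => hfh0 z hz.1 hz.2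
  have hdisc : {z : ℂ | ‖z‖ < r} = Metric.ball 0 r := by ext; simp
  rw [hdisc] at hP
  obtain ⟨Q, hQ, hPQ⟩ := (convex_ball 0 r).exists_differentiableOn_eqOn_exp_comp
    Metric.isOpen_ball hP.differentiableOn fun z hz => hP0 z (mem_ball_zero_iff.1 hz)
  have hsub : annulus 0 r ⊆ Metric.ball 0 r := fun z hz => mem_ball_zero_iff.2 hz.2
  refine ⟨k, f, Q - f, hf.analyticOnNhd (isOpen_annulus 0 r),
    ((hQ.mono hsub).sub hf).analyticOnNhd (isOpen_annulus 0 r),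
    fun z hz₀ hzr => ⟨hfh_eq z ⟨hz₀, hzr⟩, mul_left_cancel₀ (hfh0 z hz₀ hzr) ?_⟩⟩
  have hz : z ≠ 0 := norm_pos_iff.1 hz₀
  rw [← hPfg z hz₀ hzr, ← hPQ (mem_ball_zero_iff.2 hzr), hfh_eq z ⟨hz₀, hzr⟩, Pi.sub_apply,
    exp_sub, zpow_neg]
  field_simp
  simp

/-- **Winding-number cancellation.**
If `f̂` and `ĝ` are analytic and nowhere vanishing on the punctured disc `Δ_r \ {0}`
and their product extends to an analytic nowhere-vanishing function on the full disc,
then `f̂(z) = z^k·exp(f(z))` and `ĝ(z) = z^{-k}·exp(g(z))` for some integer `k` and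
analytic functions `f`, `g` on the punctured disc. -/
theorem winding_number_cancellation
    (r : ℝ) (hr : 0 < r) (fh gh : ℂ → ℂ)
    (hfh : AnalyticOnNhd ℂ fh {z : ℂ | 0 < ‖z‖ ∧ ‖z‖ < r})
    (hgh : AnalyticOnNhd ℂ gh {z : ℂ | 0 < ‖z‖ ∧ ‖z‖ < r})
    (hfh0 : ∀ z : ℂ, 0 < ‖z‖ → ‖z‖ < r → fh z ≠ 0)
    (hgh0 : ∀ z : ℂ, 0 < ‖z‖ → ‖z‖ < r → gh z ≠ 0)
    (hext : ∃ P : ℂ → ℂ,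
      AnalyticOnNhd ℂ P {z : ℂ | ‖z‖ < r} ∧
      (∀ z : ℂ, ‖z‖ < r → P z ≠ 0) ∧
      (∀ z : ℂ, 0 < ‖z‖ → ‖z‖ < r → P z = fh z * gh z)) :
    ∃ k : ℤ, ∃ f g : ℂ → ℂ,
      AnalyticOnNhd ℂ f {z : ℂ | 0 < ‖z‖ ∧ ‖z‖ < r} ∧
      AnalyticOnNhd ℂ g {z : ℂ | 0 < ‖z‖ ∧ ‖z‖ < r} ∧
      (∀ z : ℂ, 0 < ‖z‖ → ‖z‖ < r →
        fh z = z ^ k * Complex.exp (f z) ∧ gh z = z ^ (-k) * Complex.exp (g z)) :=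
  winding_number_cancellation_general r fh gh hfh hfh0 hext
end

section
/- Let ε > 0, let D = Δ_ε × Δ_ε ⊆ ℂ², and let g and w₁ be analytic functions on D with g not identically zero and with the derivative Dw₁ nowhere vanishing on D. Assume the function z₂ ↦ (∂w₁/∂z₂)(0,z₂) is not identically zero on Δ_ε (i.e. the leaf {z₁ = 0} is not a common leaf of the pair of foliations defined by dz₁ and dw₁). Suppose every point p ∈ D with (∂w₁/∂z₂)(p) ≠ 0 has an open neighborhood V ⊆ D and one-variable analytic functions f and h with g(z₁,z₂) = f(z₁)·h(w₁(z₁,z₂)) on V. Then there exist an open neighborhood W of (0,0), a one-variable analytic function f̂, and an analytic function ĥ on W satisfying (∂ĥ/∂z₁)·(∂w₁/∂z₂) = (∂ĥ/∂z₂)·(∂w₁/∂z₁) on W (i.e. dĥ ∧ dw₁ ≡ 0), such that g(z₁,z₂) = f̂(z₁)·ĥ(z₁,z₂) for all (z₁,z₂) ∈ W. -/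
open Complex

/-!
Near `(0, b)` we have `g = f(z₁) · h(w₁)`, and `f = z₁ᵏ u` with `u(0) ≠ 0` (`f` cannot vanish
identically, since `g ≢ 0`). Hence `g(0, ·)` vanishes near `b`, so on the whole slice
`z₁ = 0` by the identity theorem, and `g` is divisible by `z₁`; repeating `k` times writes
`g = z₁ᵏ G` on a bidisc `Δ_δ × Δ_ε`, with `G` analytic and `G = u · h(w₁)` near `(0, b)`.
Then `ĥ = G / u` is analytic, `g = f · ĥ`, and `dĥ ∧ dw₁` is analytic and vanishes near
`(0, b)` (where `ĥ = h ∘ w₁`), hence on the connected bidisc.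
-/

open Set Metric Filter Topology
open scoped NNReal

section IntervalIntegral

variable {E F : Type*} [NormedAddCommGroup E] [NormedSpace ℂ E]
  [NormedAddCommGroup F] [NormedSpace ℂ F] [CompleteSpace F]

theorem hasFPowerSeriesOnBall_intervalIntegral {f : ℝ → E → F}
    {p : ℝ → FormalMultilinearSeries ℂ E F} {x : E} {r : ℝ≥0} {a b : ℝ} {C : ℕ → ℝ}
    (hf : ∀ t ∈ uIcc a b, ∀ y ∈ eball (0 : E) r,
      HasSum (fun n ↦ p t n fun _ ↦ y) (f t (x + y)))
    (hp : ∀ n, ContinuousOn (fun t ↦ p t n) (uIcc a b))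
    (hC : ∀ n, ∀ t ∈ uIcc a b, ‖p t n‖ ≤ C n)
    (hCr : Summable fun n ↦ C n * r ^ n) (hr : 0 < r) :
    HasFPowerSeriesOnBall (fun y ↦ ∫ t in a..b, f t y) (fun n ↦ ∫ t in a..b, p t n) x r := by
  have hC0 : ∀ n, 0 ≤ C n := fun n ↦ (norm_nonneg _).trans (hC n a left_mem_uIcc)
  refine ⟨?_, mod_cast hr, fun {y} hy ↦ ?_⟩
  · refine FormalMultilinearSeries.le_radius_of_summable _ <|
      .of_nonneg_of_le (fun n ↦ by positivity) (fun n ↦ ?_) (hCr.mul_left |b - a|)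
    rw [← mul_assoc, mul_comm |b - a|]
    gcongr
    exact intervalIntegral.norm_integral_le_of_norm_le_const fun t ht ↦
      hC n t (uIoc_subset_uIcc ht)
  have hy' : ‖y‖ < r := by simpa [edist_zero_right, enorm_eq_nnnorm] using hy
  set ev : ∀ n, ContinuousMultilinearMap ℂ (fun _ : Fin n ↦ E) F →L[ℂ] F := fun n ↦
    ContinuousMultilinearMap.apply ℂ _ F fun _ ↦ y
  have hint : ∀ n, IntervalIntegrable (fun t ↦ ev n (p t n)) MeasureTheory.volume a b :=
    fun n ↦ ((ev n).continuous.comp_continuousOn (hp n)).intervalIntegrable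
  have happly : ∀ n, (∫ t in a..b, p t n) (fun _ ↦ y) = ∫ t in a..b, p t n fun _ ↦ y :=
    fun n ↦ ((ev n).intervalIntegral_comp_comm (hp n).intervalIntegrable).symm
  simp only [happly]
  refine intervalIntegral.hasSum_integral_of_dominated_convergence (fun n _ ↦ C n * ‖y‖ ^ n)
    (fun n ↦ (hint n).def'.aestronglyMeasurable) (fun n ↦ .of_forall fun t ht ↦ ?_)
    (.of_forall fun _ _ ↦ ?_) intervalIntegrable_const
    (.of_forall fun t ht ↦ hf t (uIoc_subset_uIcc ht) y hy)
  · calc ‖p t n fun _ ↦ y‖ ≤ ‖p t n‖ * ∏ _ : Fin n, ‖y‖ := (p t n).le_opNorm _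
      _ ≤ C n * ‖y‖ ^ n := by
        rw [Finset.prod_const, Finset.card_univ, Fintype.card_fin]
        gcongr
        exact hC n t (uIoc_subset_uIcc ht)
  · exact .of_nonneg_of_le (fun n ↦ mul_nonneg (hC0 n) (by positivity))
      (fun n ↦ by have := hC0 n; gcongr) hCr

end IntervalIntegral

section DivFst

theorem norm_ofReal_le_one_of_mem_uIcc {t : ℝ} (ht : t ∈ uIcc 0 1) : ‖(t : ℂ)‖ ≤ 1 := by
  rw [uIcc_of_le zero_le_one] at ht
  rw [Complex.norm_real, Real.norm_of_nonneg ht.1]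
  exact ht.2

theorem ofReal_mul_fst_mem_ball_prod {E : Type*} {δ : ℝ} {U : Set E} {q : ℂ × E}
    (hq : q ∈ ball (0 : ℂ) δ ×ˢ U) {t : ℝ} (ht : t ∈ uIcc 0 1) :
    ((t : ℂ) * q.1, q.2) ∈ ball (0 : ℂ) δ ×ˢ U := by
  refine ⟨?_, hq.2⟩
  rw [mem_ball_zero_iff, norm_mul]
  exact (mul_le_of_le_one_left (norm_nonneg _) (norm_ofReal_le_one_of_mem_uIcc ht)).trans_lt
    (mem_ball_zero_iff.mp hq.1)

variable {E F : Type*} [NormedAddCommGroup E] [NormedSpace ℂ E]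
  [NormedAddCommGroup F] [NormedSpace ℂ F]

noncomputable def scaleFst (t : ℂ) : ℂ × E →L[ℂ] ℂ × E :=
  t • (ContinuousLinearMap.inl ℂ ℂ E).comp (ContinuousLinearMap.fst ℂ ℂ E) +
    (ContinuousLinearMap.inr ℂ ℂ E).comp (ContinuousLinearMap.snd ℂ ℂ E)

@[simp]
theorem scaleFst_apply (t : ℂ) (y : ℂ × E) : scaleFst t y = (t * y.1, y.2) := by
  simp [scaleFst]

theorem continuous_scaleFst : Continuous (scaleFst : ℂ → ℂ × E →L[ℂ] ℂ × E) := by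
  unfold scaleFst; fun_prop

theorem norm_scaleFst_apply_le {t : ℂ} (ht : ‖t‖ ≤ 1) (y : ℂ × E) : ‖scaleFst t y‖ ≤ ‖y‖ := by
  rw [scaleFst_apply, Prod.norm_def, Prod.norm_def, norm_mul]
  gcongr
  exact mul_le_of_le_one_left (norm_nonneg _) ht

theorem norm_scaleFst_le {t : ℂ} (ht : ‖t‖ ≤ 1) : ‖(scaleFst t : ℂ × E →L[ℂ] ℂ × E)‖ ≤ 1 :=
  ContinuousLinearMap.opNorm_le_bound _ zero_le_one fun y ↦ by
    simpa using norm_scaleFst_apply_le ht y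

/-- `(g (z₁, e) - g (0, e)) / z₁`, written so that it makes sense on the slice `z₁ = 0` too. -/
noncomputable def divFst (g : ℂ × E → F) (q : ℂ × E) : F :=
  ∫ t in (0 : ℝ)..1, fderiv ℂ g ((t : ℂ) * q.1, q.2) (1, 0)

theorem hasDerivAt_comp_ofReal_mul_fst {g : ℂ × E → F} {q : ℂ × E} {t : ℝ}
    (hg : DifferentiableAt ℂ g ((t : ℂ) * q.1, q.2)) :
    HasDerivAt (fun s : ℝ ↦ g ((s : ℂ) * q.1, q.2))
      (q.1 • fderiv ℂ g ((t : ℂ) * q.1, q.2) (1, 0)) t := by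
  have hpath : HasDerivAt (fun s : ℝ ↦ ((s : ℂ) * q.1, q.2)) (q.1, 0) t := by
    simpa using (Complex.ofRealCLM.hasDerivAt.mul_const q.1).prodMk (hasDerivAt_const t q.2)
  have hline : ((q.1, 0) : ℂ × E) = q.1 • ((1 : ℂ), (0 : E)) := by simp
  have := (hg.hasFDerivAt.restrictScalars ℝ).comp_hasDerivAt t hpath
  rwa [ContinuousLinearMap.coe_restrictScalars', hline, map_smul] at this

variable [CompleteSpace F]

theorem fst_smul_divFst {g : ℂ × E → F} {δ : ℝ} {U : Set E}
    (hg : AnalyticOnNhd ℂ g (ball 0 δ ×ˢ U)) (hg0 : ∀ e ∈ U, g (0, e) = 0) {q : ℂ × E}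
    (hq : q ∈ ball (0 : ℂ) δ ×ˢ U) : q.1 • divFst g q = g q := by
  have hpath (t : ℝ) (ht : t ∈ uIcc 0 1) := ofReal_mul_fst_mem_ball_prod hq ht
  have hcont : ContinuousOn (fun t : ℝ ↦ fderiv ℂ g ((t : ℂ) * q.1, q.2) (1, 0)) (uIcc 0 1) :=
    fun t ht ↦ (((hg _ (hpath t ht)).fderiv.continuousAt.clm_apply continuousAt_const).comp
      (f := fun s : ℝ ↦ ((s : ℂ) * q.1, q.2)) (by fun_prop)).continuousWithinAt
  have hftc := intervalIntegral.integral_eq_sub_of_hasDerivAt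
    (fun t ht ↦ hasDerivAt_comp_ofReal_mul_fst (hg _ (hpath t ht)).differentiableAt)
    (hcont.intervalIntegrable.smul q.1)
  rw [intervalIntegral.integral_smul] at hftc
  simpa [divFst, hg0 q.2 hq.2] using hftc

/-- Near `q` on the slice, `divFst g (q + y) = ∫₀¹ ∂₁g (q + scaleFst t y) dt` with
`‖scaleFst t‖ ≤ 1`: integrate the power series of `∂₁g` at `q` termwise. -/
theorem AnalyticAt.analyticAt_divFst {g : ℂ × E → F} {q : ℂ × E} (hg : AnalyticAt ℂ g q)
    (hq : q.1 = 0) : AnalyticAt ℂ (divFst g) q := by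
  obtain ⟨ps, r, hps⟩ := (ContinuousLinearMap.apply ℂ F ((1 : ℂ), (0 : E))).analyticAt _
    |>.comp hg.fderiv
  obtain ⟨ρ, hρ0, hρr⟩ := ENNReal.lt_iff_exists_nnreal_btwn.mp hps.r_pos
  have hsum (t : ℝ) (ht : t ∈ uIcc 0 1) (y : ℂ × E) (hy : y ∈ eball 0 ρ) :
      HasSum (fun n ↦ ps.compContinuousLinearMap (scaleFst (t : ℂ)) n fun _ ↦ y)
        (fderiv ℂ g (q + scaleFst (t : ℂ) (q + y - q)) (1, 0)) := by
    rw [add_sub_cancel_left]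
    refine hps.hasSum <| mem_eball_zero_iff.mpr <|
      lt_of_le_of_lt ?_ ((mem_eball_zero_iff.mp hy).trans hρr)
    exact enorm_le_iff_norm_le.mpr (norm_scaleFst_apply_le (norm_ofReal_le_one_of_mem_uIcc ht) y)
  have hcont (n : ℕ) : ContinuousOn (fun t : ℝ ↦ ps.compContinuousLinearMap (scaleFst (t : ℂ)) n)
      (uIcc 0 1) :=
    ((ps n).compContinuousLinearMapLRight.coe_continuous.comp
      (continuous_pi fun _ ↦ continuous_scaleFst.comp Complex.continuous_ofReal)).continuousOn
  have hbound (n : ℕ) (t : ℝ) (ht : t ∈ uIcc 0 1) :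
      ‖ps.compContinuousLinearMap (scaleFst (t : ℂ)) n‖ ≤ ‖ps n‖ :=
    ((ps n).norm_compContinuousLinearMap_le _).trans <| mul_le_of_le_one_right (norm_nonneg _) <|
      Finset.prod_le_one (fun _ _ ↦ norm_nonneg _) fun _ _ ↦
        norm_scaleFst_le (norm_ofReal_le_one_of_mem_uIcc ht)
  have hseries := hasFPowerSeriesOnBall_intervalIntegral (a := 0) (b := 1)
    (f := fun t y ↦ fderiv ℂ g (q + scaleFst (t : ℂ) (y - q)) (1, 0)) (x := q) hsum hcont hbound
    (ps.summable_norm_mul_pow (hρr.trans_le hps.r_le)) (mod_cast hρ0)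
  convert hseries.analyticAt using 2 with y
  obtain ⟨q₁, e⟩ := q
  obtain rfl : q₁ = 0 := hq
  simp [divFst]

theorem analyticOnNhd_divFst {g : ℂ × E → F} {δ : ℝ} {U : Set E} (hU : IsOpen U)
    (hg : AnalyticOnNhd ℂ g (ball 0 δ ×ˢ U)) (hg0 : ∀ e ∈ U, g (0, e) = 0) :
    AnalyticOnNhd ℂ (divFst g) (ball 0 δ ×ˢ U) := by
  intro q hq
  by_cases hq1 : q.1 = 0
  · exact (hg q hq).analyticAt_divFst hq1
  have hopen : IsOpen (ball (0 : ℂ) δ ×ˢ U ∩ {q | q.1 ≠ 0}) :=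
    (isOpen_ball.prod hU).inter (isOpen_ne_fun continuous_fst continuous_const)
  refine ((analyticAt_fst.inv hq1).smul (hg q hq)).congr ?_
  filter_upwards [hopen.mem_nhds ⟨hq, hq1⟩] with p ⟨hp, hp1⟩
  show p.1⁻¹ • g p = divFst g p
  rw [← fst_smul_divFst hg hg0 hp, inv_smul_smul₀ hp1]

end DivFst

section Extension

theorem dense_setOf_fst_ne_zero {E : Type*} [TopologicalSpace E] :
    Dense {q : ℂ × E | q.1 ≠ 0} :=
  (dense_compl_singleton (0 : ℂ)).preimage isOpenMap_fst

theorem Set.EqOn.of_fst_ne_zero {E F : Type*} [TopologicalSpace E] [TopologicalSpace F]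
    [T2Space F] {u v : ℂ × E → F} {V : Set (ℂ × E)} (hV : IsOpen V)
    (hu : ContinuousOn u V) (hv : ContinuousOn v V) (huv : EqOn u v (V ∩ {q | q.1 ≠ 0})) :
    EqOn u v V :=
  huv.of_subset_closure hu hv inter_subset_left
    (dense_setOf_fst_ne_zero.open_subset_closure_inter hV)

variable {E F : Type*} [NormedAddCommGroup E] [NormedSpace ℂ E]
  [NormedAddCommGroup F] [NormedSpace ℂ F]

theorem slice_eq_zero_of_eventually_eq_zero {g : ℂ × E → F} {δ : ℝ} {U : Set E} {b : E}
    (hδ : 0 < δ) (hU : IsPreconnected U) (hg : AnalyticOnNhd ℂ g (ball 0 δ ×ˢ U)) (hb : b ∈ U)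
    (hgb : ∀ᶠ e in 𝓝 b, g (0, e) = 0) : ∀ e ∈ U, g (0, e) = 0 := by
  have hslice : AnalyticOnNhd ℂ (fun e ↦ g (0, e)) U := fun e he ↦
    (hg _ ⟨mem_ball_self hδ, he⟩).comp (analyticAt_const.prod analyticAt_id)
  exact fun e he ↦ hslice.eqOn_zero_of_preconnected_of_eventuallyEq_zero hU hb hgb he

variable [CompleteSpace F]

theorem exists_analyticOnNhd_eq_fst_pow_smul {g ψ : ℂ × E → F} {δ : ℝ} {U : Set E}
    {V : Set (ℂ × E)} {b : E} (hU : IsOpen U) (hUc : IsPreconnected U)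
    (hg : AnalyticOnNhd ℂ g (ball 0 δ ×ˢ U)) (hV : IsOpen V) (hbV : (0, b) ∈ V)
    (hVs : V ⊆ ball 0 δ ×ˢ U) (hψ : ContinuousOn ψ V) (k : ℕ)
    (hgψ : ∀ q ∈ V, g q = q.1 ^ k • ψ q) :
    ∃ G, AnalyticOnNhd ℂ G (ball 0 δ ×ˢ U) ∧ ∀ q ∈ ball 0 δ ×ˢ U, g q = q.1 ^ k • G q := by
  induction k generalizing g with
  | zero => exact ⟨g, hg, fun q _ ↦ by rw [pow_zero, one_smul]⟩
  | succ k ih =>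
    have hslice : ∀ e ∈ U, g (0, e) = 0 := by
      refine slice_eq_zero_of_eventually_eq_zero (pos_of_mem_ball (hVs hbV).1) hUc hg
        (hVs hbV).2 ?_
      have hVb : {e | ((0 : ℂ), e) ∈ V} ∈ 𝓝 b :=
        (Continuous.prodMk_right (0 : ℂ)).continuousAt.preimage_mem_nhds (hV.mem_nhds hbV)
      filter_upwards [hVb] with e he
      simp [hgψ _ he]
    have hdiv := analyticOnNhd_divFst hU hg hslice
    have hdivψ : EqOn (divFst g) (fun q ↦ q.1 ^ k • ψ q) V := by
      refine .of_fst_ne_zero hV (hdiv.continuousOn.mono hVs)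
        ((continuous_fst.pow k).continuousOn.smul hψ) fun q ⟨hqV, hq1⟩ ↦ ?_
      refine smul_right_injective F hq1 ?_
      simp only
      rw [fst_smul_divFst hg hslice (hVs hqV), hgψ q hqV, pow_succ', mul_smul]
    obtain ⟨G, hG, hgG⟩ := ih hdiv hdivψ
    refine ⟨G, hG, fun q hq ↦ ?_⟩
    rw [← fst_smul_divFst hg hslice hq, hgG q hq, ← mul_smul, ← pow_succ']

theorem exists_analyticOnNhd_extension_of_eq_smul {f u : ℂ → ℂ} {k : ℕ} {g ψ : ℂ × E → F}
    {δ : ℝ} {U : Set E} {V : Set (ℂ × E)} {b : E} (hU : IsOpen U) (hUc : IsPreconnected U)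
    (hg : AnalyticOnNhd ℂ g (ball 0 δ ×ˢ U))
    (hfu : ∀ z ∈ ball (0 : ℂ) δ, AnalyticAt ℂ u z ∧ u z ≠ 0 ∧ f z = z ^ k * u z)
    (hV : IsOpen V) (hbV : (0, b) ∈ V) (hVs : V ⊆ ball 0 δ ×ˢ U) (hψ : ContinuousOn ψ V)
    (hgψ : ∀ q ∈ V, g q = f q.1 • ψ q) :
    ∃ H, AnalyticOnNhd ℂ H (ball 0 δ ×ˢ U) ∧ (∀ q ∈ ball 0 δ ×ˢ U, g q = f q.1 • H q) ∧
      EqOn H ψ V := by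
  have hu (q : ℂ × E) (hq : q ∈ ball 0 δ ×ˢ U) : AnalyticAt ℂ (fun q ↦ u q.1) q :=
    (hfu q.1 hq.1).1.comp analyticAt_fst
  obtain ⟨G, hG, hgG⟩ := exists_analyticOnNhd_eq_fst_pow_smul (ψ := fun q ↦ u q.1 • ψ q) hU hUc
    hg hV hbV hVs
    (ContinuousOn.smul (fun q hq ↦ (hu q (hVs hq)).continuousAt.continuousWithinAt) hψ) k
    fun q hq ↦ by rw [hgψ q hq, (hfu q.1 (hVs hq).1).2.2, mul_smul]
  have hH : AnalyticOnNhd ℂ (fun q ↦ (u q.1)⁻¹ • G q) (ball 0 δ ×ˢ U) := fun q hq ↦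
    ((hu q hq).inv (hfu q.1 hq.1).2.1).smul (hG q hq)
  refine ⟨fun q ↦ (u q.1)⁻¹ • G q, hH, fun q hq ↦ ?_, ?_⟩
  · rw [hgG q hq, (hfu q.1 hq.1).2.2, mul_smul, smul_inv_smul₀ (hfu q.1 hq.1).2.1]
  refine .of_fst_ne_zero hV (hH.continuousOn.mono hVs) hψ fun q ⟨hqV, hq1⟩ ↦ ?_
  obtain ⟨-, huq, hfq⟩ := hfu q.1 (hVs hqV).1
  refine smul_right_injective F (hfq ▸ mul_ne_zero (pow_ne_zero k hq1) huq) ?_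
  simp only
  rw [← hgψ q hqV, hgG q (hVs hqV), hfq, mul_smul, smul_inv_smul₀ huq]

end Extension

section Jacobian

/-- `du ∧ dv = jacobianDet u v • dz₁ ∧ dz₂`. -/
noncomputable def jacobianDet (u v : ℂ × ℂ → ℂ) (q : ℂ × ℂ) : ℂ :=
  fderiv ℂ u q (1, 0) * fderiv ℂ v q (0, 1) - fderiv ℂ u q (0, 1) * fderiv ℂ v q (1, 0)

theorem AnalyticAt.jacobianDet {u v : ℂ × ℂ → ℂ} {q : ℂ × ℂ} (hu : AnalyticAt ℂ u q)
    (hv : AnalyticAt ℂ v q) : AnalyticAt ℂ (jacobianDet u v) q := by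
  have happ (w : ℂ × ℂ → ℂ) (hw : AnalyticAt ℂ w q) (x : ℂ × ℂ) :
      AnalyticAt ℂ (fun q ↦ fderiv ℂ w q x) q :=
    (ContinuousLinearMap.apply ℂ ℂ x).analyticAt _ |>.comp hw.fderiv
  exact ((happ u hu _).mul (happ v hv _)).sub ((happ u hu _).mul (happ v hv _))

theorem jacobianDet_eq_zero_of_eventuallyEq_comp {u v : ℂ × ℂ → ℂ} {h : ℂ → ℂ} {q : ℂ × ℂ}
    (huv : u =ᶠ[𝓝 q] h ∘ v) (hh : DifferentiableAt ℂ h (v q)) (hv : DifferentiableAt ℂ v q) :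
    jacobianDet u v q = 0 := by
  have hfd (x : ℂ × ℂ) : fderiv ℂ u q x = fderiv ℂ v q x * deriv h (v q) := by
    rw [huv.fderiv_eq, fderiv_comp q hh hv, hh.hasDerivAt.hasFDerivAt.fderiv]
    simp
  simp only [jacobianDet, hfd]
  ring

theorem eqOn_jacobianDet_zero_of_eqOn_comp {u v : ℂ × ℂ → ℂ} {h : ℂ → ℂ} {W O : Set (ℂ × ℂ)}
    (hW : IsPreconnected W) (hu : AnalyticOnNhd ℂ u W) (hv : AnalyticOnNhd ℂ v W)
    (hO : IsOpen O) (hOW : O ⊆ W) (hOne : O.Nonempty) (hh : ∀ q ∈ O, DifferentiableAt ℂ h (v q))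
    (huv : EqOn u (h ∘ v) O) : EqOn (jacobianDet u v) 0 W := by
  obtain ⟨q₀, hq₀⟩ := hOne
  refine AnalyticOnNhd.eqOn_zero_of_preconnected_of_eventuallyEq_zero
    (fun q hq ↦ (hu q hq).jacobianDet (hv q hq)) hW (hOW hq₀) ?_
  filter_upwards [hO.mem_nhds hq₀] with q hq
  exact jacobianDet_eq_zero_of_eventuallyEq_comp (eventuallyEq_of_mem (hO.mem_nhds hq) huv)
    (hh q hq) (hv q (hOW hq)).differentiableAt

end Jacobian

section Factorization

theorem AnalyticAt.exists_eventually_eq_pow_mul {f : ℂ → ℂ} (hf : AnalyticAt ℂ f 0)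
    (hf0 : ¬∀ᶠ z in 𝓝 0, f z = 0) :
    ∃ (k : ℕ) (u : ℂ → ℂ), ∀ᶠ z in 𝓝 0,
      AnalyticAt ℂ f z ∧ AnalyticAt ℂ u z ∧ u z ≠ 0 ∧ f z = z ^ k * u z := by
  obtain ⟨k, u, hu, hu0, hfu⟩ := hf.exists_eventuallyEq_pow_smul_nonzero_iff.mpr hf0
  refine ⟨k, u, ?_⟩
  filter_upwards [hf.eventually_analyticAt, hu.eventually_analyticAt,
    hu.continuousAt.eventually_ne hu0, hfu] with z hfz huz hu0z hfuz
  exact ⟨hfz, huz, hu0z, by simpa using hfuz⟩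

theorem not_eventually_eq_zero_of_eqOn_smul {E F : Type*} [NormedAddCommGroup E]
    [NormedSpace ℂ E] [NormedAddCommGroup F] [NormedSpace ℂ F] {g ψ : ℂ × E → F} {f : ℂ → ℂ}
    {s V : Set (ℂ × E)} {b : E} (hs : IsPreconnected s) (hg : AnalyticOnNhd ℂ g s)
    (hg0 : ∃ p ∈ s, g p ≠ 0) (hV : IsOpen V) (hbV : (0, b) ∈ V) (hVs : V ⊆ s)
    (hgf : ∀ q ∈ V, g q = f q.1 • ψ q) : ¬∀ᶠ z in 𝓝 0, f z = 0 := by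
  intro hf0
  obtain ⟨p, hp, hgp⟩ := hg0
  refine hgp (hg.eqOn_zero_of_preconnected_of_eventuallyEq_zero hs (hVs hbV) ?_ hp)
  filter_upwards [hV.mem_nhds hbV, (continuous_fst.tendsto ((0 : ℂ), b)).eventually hf0]
    with q hqV hq
  simp [hgf q hqV, hq]

end Factorization

theorem closed_decomposition_at_tangency_point_general
    (ε : ℝ)
    (g w₁ : ℂ × ℂ → ℂ)
    (hg : AnalyticOnNhd ℂ g {p : ℂ × ℂ | ‖p.1‖ < ε ∧ ‖p.2‖ < ε})
    (hw₁ : AnalyticOnNhd ℂ w₁ {p : ℂ × ℂ | ‖p.1‖ < ε ∧ ‖p.2‖ < ε})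
    (hg0 : ∃ p : ℂ × ℂ, ‖p.1‖ < ε ∧ ‖p.2‖ < ε ∧ g p ≠ 0)
    (hnotcommon : ∃ b : ℂ, ‖b‖ < ε ∧ fderiv ℂ w₁ (0, b) (0, 1) ≠ 0)
    (hsplit : ∀ p : ℂ × ℂ, ‖p.1‖ < ε → ‖p.2‖ < ε →
      fderiv ℂ w₁ p (0, 1) ≠ 0 →
      ∃ V : Set (ℂ × ℂ), IsOpen V ∧ p ∈ V ∧
        V ⊆ {q : ℂ × ℂ | ‖q.1‖ < ε ∧ ‖q.2‖ < ε} ∧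
        ∃ f h : ℂ → ℂ,
          (∀ q ∈ V, AnalyticAt ℂ f q.1) ∧
          (∀ q ∈ V, AnalyticAt ℂ h (w₁ q)) ∧
          (∀ q ∈ V, g q = f q.1 * h (w₁ q))) :
    ∃ W : Set (ℂ × ℂ), IsOpen W ∧ ((0 : ℂ), (0 : ℂ)) ∈ W ∧
      W ⊆ {p : ℂ × ℂ | ‖p.1‖ < ε ∧ ‖p.2‖ < ε} ∧
      ∃ fh : ℂ → ℂ, ∃ hh : ℂ × ℂ → ℂ,
        (∀ q ∈ W, AnalyticAt ℂ fh q.1) ∧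
        AnalyticOnNhd ℂ hh W ∧
        (∀ q ∈ W, fderiv ℂ hh q (1, 0) * fderiv ℂ w₁ q (0, 1) =
          fderiv ℂ hh q (0, 1) * fderiv ℂ w₁ q (1, 0)) ∧
        (∀ q ∈ W, g q = fh q.1 * hh q) := by
  obtain ⟨b, hb, hbw⟩ := hnotcommon
  obtain ⟨p, hp₁, hp₂, hgp⟩ := hg0
  have hε : 0 < ε := (norm_nonneg b).trans_lt hb
  have hbε : b ∈ ball (0 : ℂ) ε := mem_ball_zero_iff.mpr hb
  have hD : {p : ℂ × ℂ | ‖p.1‖ < ε ∧ ‖p.2‖ < ε} = ball 0 ε ×ˢ ball 0 ε := by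
    ext; simp
  obtain ⟨V, hVo, hbV, hVD, f, h, hf, hh, hgfh⟩ := hsplit (0, b) (by simpa) hb hbw
  rw [hD] at hg hw₁ hVD ⊢
  have hf0 := not_eventually_eq_zero_of_eqOn_smul
    ((convex_ball _ _).prod (convex_ball _ _)).isPreconnected hg
    ⟨p, ⟨mem_ball_zero_iff.mpr hp₁, mem_ball_zero_iff.mpr hp₂⟩, hgp⟩ hVo hbV hVD hgfh
  obtain ⟨k, u, hfu⟩ := (hf _ hbV).exists_eventually_eq_pow_mul hf0
  obtain ⟨δ, hδ, hfuδ⟩ := eventually_nhds_iff_ball.mp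
    (Filter.Eventually.and (ball_mem_nhds (0 : ℂ) hε) hfu)
  set W := ball (0 : ℂ) δ ×ˢ ball (0 : ℂ) ε
  have hWD : W ⊆ ball 0 ε ×ˢ ball 0 ε := fun q hq ↦ ⟨(hfuδ q.1 hq.1).1, hq.2⟩
  have hVWo : IsOpen (V ∩ W) := hVo.inter (isOpen_ball.prod isOpen_ball)
  have hbVW : (0, b) ∈ V ∩ W := ⟨hbV, mem_ball_self hδ, hbε⟩
  obtain ⟨H, hH, hgH, hHh⟩ := exists_analyticOnNhd_extension_of_eq_smul (ψ := h ∘ w₁)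
    isOpen_ball (convex_ball _ _).isPreconnected (hg.mono hWD) (fun z hz ↦ (hfuδ z hz).2.2)
    hVWo hbVW inter_subset_right
    (fun q hq ↦ ((hh q hq.1).continuousAt.comp (hw₁ q (hVD hq.1)).continuousAt).continuousWithinAt)
    fun q hq ↦ hgfh q hq.1
  refine ⟨W, isOpen_ball.prod isOpen_ball, ⟨mem_ball_self hδ, mem_ball_self hε⟩, hWD, f, H,
    fun q hq ↦ (hfuδ q.1 hq.1).2.1, hH, fun q hq ↦ sub_eq_zero.mp ?_, hgH⟩
  exact eqOn_jacobianDet_zero_of_eqOn_comp ((convex_ball _ _).prod (convex_ball _ _)).isPreconnected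
    hH (hw₁.mono hWD) hVWo inter_subset_right ⟨_, hbVW⟩ (fun q hq ↦ (hh q hq.1).differentiableAt)
    hHh hq

/-- **Propagation of closed decompositions across a tangency point whose leaf is not a
common leaf.** For `w = g dz₁ dw₁` on the bidisc `D = Δ_ε × Δ_ε`, with `g` not identically
zero, `Dw₁` nowhere vanishing, and the leaf `{z₁ = 0}` not a common leaf
(`z₂ ↦ (∂w₁/∂z₂)(0,z₂)` not identically zero): if every point where `∂w₁/∂z₂ ≠ 0` has a
neighborhood with `g = f(z₁)·h(w₁)`, then `(0,0)` has a neighborhood `W` carrying a closed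
decomposition `g = f̂(z₁)·ĥ` with `dĥ ∧ dw₁ ≡ 0`. -/
theorem closed_decomposition_at_tangency_point
    (ε : ℝ) (hε : 0 < ε)
    (g w₁ : ℂ × ℂ → ℂ)
    (hg : AnalyticOnNhd ℂ g {p : ℂ × ℂ | ‖p.1‖ < ε ∧ ‖p.2‖ < ε})
    (hw₁ : AnalyticOnNhd ℂ w₁ {p : ℂ × ℂ | ‖p.1‖ < ε ∧ ‖p.2‖ < ε})
    (hg0 : ∃ p : ℂ × ℂ, ‖p.1‖ < ε ∧ ‖p.2‖ < ε ∧ g p ≠ 0)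
    (hDw₁ : ∀ p : ℂ × ℂ, ‖p.1‖ < ε → ‖p.2‖ < ε →
      fderiv ℂ w₁ p ≠ 0)
    (hnotcommon : ∃ b : ℂ, ‖b‖ < ε ∧ fderiv ℂ w₁ (0, b) (0, 1) ≠ 0)
    (hsplit : ∀ p : ℂ × ℂ, ‖p.1‖ < ε → ‖p.2‖ < ε →
      fderiv ℂ w₁ p (0, 1) ≠ 0 →
      ∃ V : Set (ℂ × ℂ), IsOpen V ∧ p ∈ V ∧
        V ⊆ {q : ℂ × ℂ | ‖q.1‖ < ε ∧ ‖q.2‖ < ε} ∧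
        ∃ f h : ℂ → ℂ,
          (∀ q ∈ V, AnalyticAt ℂ f q.1) ∧
          (∀ q ∈ V, AnalyticAt ℂ h (w₁ q)) ∧
          (∀ q ∈ V, g q = f q.1 * h (w₁ q))) :
    ∃ W : Set (ℂ × ℂ), IsOpen W ∧ ((0 : ℂ), (0 : ℂ)) ∈ W ∧
      W ⊆ {p : ℂ × ℂ | ‖p.1‖ < ε ∧ ‖p.2‖ < ε} ∧
      ∃ fh : ℂ → ℂ, ∃ hh : ℂ × ℂ → ℂ,
        (∀ q ∈ W, AnalyticAt ℂ fh q.1) ∧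
        AnalyticOnNhd ℂ hh W ∧
        (∀ q ∈ W, fderiv ℂ hh q (1, 0) * fderiv ℂ w₁ q (0, 1) =
          fderiv ℂ hh q (0, 1) * fderiv ℂ w₁ q (1, 0)) ∧
        (∀ q ∈ W, g q = fh q.1 * hh q) :=
  closed_decomposition_at_tangency_point_general ε g w₁ hg hw₁ hg0 hnotcommon hsplit
end

section
/- Let ε > 0, let m be a natural number, let D = Δ_ε × Δ_ε ⊆ ℂ², let g be an analytic function on D, and set π(z₁,z₂) = z₁·(1+z₁^m·z₂). Suppose there exist b with |b| < ε, an open neighborhood V ⊆ D of (0,b), and one-variable analytic functions f and h such that g(z₁,z₂) = f(z₁)·h(π(z₁,z₂)) for all (z₁,z₂) ∈ V. Then there exist an open neighborhood W of (0,0) and one-variable analytic functions f̂ and ĥ such that g(z₁,z₂) = f̂(z₁)·ĥ(π(z₁,z₂)) for all (z₁,z₂) ∈ W. -/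
open Filter Topology Metric Set

/-! `π` vanishes on the common leaf `{z₁ = 0}`, so by the tube lemma over the compact disc
`|z₂| ≤ ε` there is a `δ > 0` such that `f(z₁) h(π(z₁, z₂))` is analytic on the whole bidisc
`Δ_δ × Δ_ε`. This bidisc is connected and contains `(0, b)`, near which `g` equals
`f(z₁) h(π(z₁, z₂))`; by the identity theorem the equality holds on all of it, so `f̂ = f` and
`ĥ = h` work near `(0, 0)`. -/

/-- The map `π` of the normal form `w = g dz₁ dπ`. -/
def leafProjection (m : ℕ) (p : ℂ × ℂ) : ℂ := p.1 * (1 + p.1 ^ m * p.2)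

lemma leafProjection_zero_left (m : ℕ) (z : ℂ) : leafProjection m (0, z) = 0 := by
  simp [leafProjection]

lemma analyticAt_leafProjection (m : ℕ) (p : ℂ × ℂ) : AnalyticAt ℂ (leafProjection m) p :=
  analyticAt_fst.mul (analyticAt_const.add ((analyticAt_fst.pow m).mul analyticAt_snd))

lemma exists_bidisc_analyticAt_comp_leafProjection (m : ℕ) {ε : ℝ} (hε : 0 < ε) {f h : ℂ → ℂ}
    (hf : AnalyticAt ℂ f 0) (hh : AnalyticAt ℂ h 0) :
    ∃ δ > 0, δ ≤ ε ∧ ∀ p ∈ ball (0 : ℂ) δ ×ˢ ball (0 : ℂ) ε,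
      AnalyticAt ℂ f p.1 ∧ AnalyticAt ℂ h (leafProjection m p) := by
  have hπ : ∀ y ∈ closedBall (0 : ℂ) ε, Tendsto (leafProjection m) (𝓝 (0, y)) (𝓝 0) :=
    fun y _ ↦ by
      simpa only [ContinuousAt, leafProjection_zero_left] using
        (analyticAt_leafProjection m (0, y)).continuousAt
  have htube : ∀ᶠ x in 𝓝 (0 : ℂ), ∀ y ∈ closedBall (0 : ℂ) ε,
      AnalyticAt ℂ h (leafProjection m (x, y)) :=
    (isCompact_closedBall 0 ε).eventually_forall_of_forall_eventually fun y hy ↦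
      hπ y hy hh.eventually_analyticAt
  obtain ⟨δ, hδ, hball⟩ := eventually_nhds_iff_ball.1 (hf.eventually_analyticAt.and htube)
  refine ⟨min δ ε, lt_min hδ hε, min_le_right δ ε, fun p ⟨hp₁, hp₂⟩ ↦ ?_⟩
  obtain ⟨hfp, hhp⟩ := hball p.1 (ball_subset_ball (min_le_left δ ε) hp₁)
  exact ⟨hfp, hhp p.2 (ball_subset_closedBall hp₂)⟩

/-- **Propagation of closed decompositions along a common leaf.**
For `g` analytic on the bidisc `D = Δ_ε × Δ_ε` and `π(z₁,z₂) = z₁(1+z₁^m z₂)`: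
if `g = f(z₁)·h(π(z₁,z₂))` on a neighborhood of some point `(0,b)` of the common leaf
`{z₁ = 0}`, then `g = f̂(z₁)·ĥ(π(z₁,z₂))` on a neighborhood of `(0,0)`. -/
theorem closed_decomposition_propagates_along_common_leaf
    (ε : ℝ) (hε : 0 < ε) (m : ℕ)
    (g : ℂ × ℂ → ℂ)
    (hg : AnalyticOnNhd ℂ g {p : ℂ × ℂ | ‖p.1‖ < ε ∧ ‖p.2‖ < ε})
    (hyp : ∃ b : ℂ, ‖b‖ < ε ∧
      ∃ V : Set (ℂ × ℂ), IsOpen V ∧ ((0 : ℂ), b) ∈ V ∧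
        V ⊆ {p : ℂ × ℂ | ‖p.1‖ < ε ∧ ‖p.2‖ < ε} ∧
        ∃ f h : ℂ → ℂ,
          (∀ p ∈ V, AnalyticAt ℂ f p.1) ∧
          (∀ p ∈ V, AnalyticAt ℂ h (p.1 * (1 + p.1 ^ m * p.2))) ∧
          (∀ p ∈ V, g p = f p.1 * h (p.1 * (1 + p.1 ^ m * p.2)))) :
    ∃ W : Set (ℂ × ℂ), IsOpen W ∧ ((0 : ℂ), (0 : ℂ)) ∈ W ∧
      W ⊆ {p : ℂ × ℂ | ‖p.1‖ < ε ∧ ‖p.2‖ < ε} ∧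
      ∃ fh hh : ℂ → ℂ,
        (∀ p ∈ W, AnalyticAt ℂ fh p.1) ∧
        (∀ p ∈ W, AnalyticAt ℂ hh (p.1 * (1 + p.1 ^ m * p.2))) ∧
        (∀ p ∈ W, g p = fh p.1 * hh (p.1 * (1 + p.1 ^ m * p.2))) := by
  obtain ⟨b, hb, V, hV, hbV, -, f, h, hfV, hhV, hgV⟩ := hyp
  have hf₀ : AnalyticAt ℂ f 0 := hfV _ hbV
  have hh₀ : AnalyticAt ℂ h 0 := by simpa using hhV _ hbV
  obtain ⟨δ, hδ, hδε, hfh⟩ := exists_bidisc_analyticAt_comp_leafProjection m hε hf₀ hh₀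
  set W := ball (0 : ℂ) δ ×ˢ ball (0 : ℂ) ε
  have hWD : W ⊆ {p : ℂ × ℂ | ‖p.1‖ < ε ∧ ‖p.2‖ < ε} := fun p ⟨hp₁, hp₂⟩ ↦
    ⟨(mem_ball_zero_iff.1 hp₁).trans_le hδε, mem_ball_zero_iff.1 hp₂⟩
  have hF : AnalyticOnNhd ℂ (fun p ↦ f p.1 * h (leafProjection m p)) W := fun p hp ↦
    ((hfh p hp).1.comp analyticAt_fst).mul ((hfh p hp).2.comp (analyticAt_leafProjection m p))
  have hgF : EqOn g (fun p ↦ f p.1 * h (leafProjection m p)) W :=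
    (hg.mono hWD).eqOn_of_preconnected_of_eventuallyEq hF
      ((convex_ball _ _).prod (convex_ball _ _)).isPreconnected
      ⟨mem_ball_self hδ, mem_ball_zero_iff.2 hb⟩ (eventually_of_mem (hV.mem_nhds hbV) hgV)
  exact ⟨W, isOpen_ball.prod isOpen_ball, ⟨mem_ball_self hδ, mem_ball_self hε⟩, hWD, f, h,
    fun p hp ↦ (hfh p hp).1, fun p hp ↦ (hfh p hp).2, hgF⟩
end

section
/- Let r, s > 0 and let g be an analytic nowhere-vanishing function on the polydisc D = Δ_r × Δ_s ⊆ ℂ². Then g satisfies the differential equation g·(∂²g/∂z₁∂z₂) = (∂g/∂z₁)·(∂g/∂z₂) at every point of D (equivalently, ∂²(log g)/∂z₁∂z₂ = 0) if and only if there exist analytic functions f₁ on Δ_r and f₂ on Δ_s such that g(z₁,z₂) = f₁(z₁)·f₂(z₂) for all (z₁,z₂) ∈ D. -/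
/-!
If `g ≠ 0` and `g ∂₁∂₂g = ∂₁g ∂₂g`, the logarithmic derivative `∂₁g / g` has vanishing
`∂₂`-derivative, so it does not depend on `z₂`. Consequently `g(·, z₂) / g(·, b)` has vanishing
`∂₁`-derivative, which gives `g(z₁, z₂) g(a, b) = g(z₁, b) g(a, z₂)` on a product of connected
open sets. Conversely, a product `f₁(z₁) f₂(z₂)` satisfies the equation by direct computation.
-/

open Set

section Slices

variable {𝕜 E F : Type*} [NontriviallyNormedField 𝕜] [NormedAddCommGroup E] [NormedSpace 𝕜 E]
  [NormedAddCommGroup F] [NormedSpace 𝕜 F]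

theorem HasFDerivAt.hasDerivAt_fst_slice {h : 𝕜 × E → F} {h' : 𝕜 × E →L[𝕜] F} {p : 𝕜 × E}
    (hh : HasFDerivAt h h' p) : HasDerivAt (fun z => h (z, p.2)) (h' (1, 0)) p.1 :=
  hh.comp_hasDerivAt_of_eq p.1 ((hasDerivAt_id p.1).prodMk (hasDerivAt_const p.1 p.2)) rfl

theorem HasFDerivAt.hasDerivAt_snd_slice {h : E × 𝕜 → F} {h' : E × 𝕜 →L[𝕜] F} {p : E × 𝕜}
    (hh : HasFDerivAt h h' p) : HasDerivAt (fun z => h (p.1, z)) (h' (0, 1)) p.2 :=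
  hh.comp_hasDerivAt_of_eq p.2 ((hasDerivAt_const p.2 p.1).prodMk (hasDerivAt_id p.2)) rfl

end Slices

theorem HasDerivAt.div_of_mul_eq_mul {𝕜 : Type*} [NontriviallyNormedField 𝕜] {f g : 𝕜 → 𝕜}
    {f' g' x : 𝕜} (hf : HasDerivAt f f' x) (hg : HasDerivAt g g' x) (hx : g x ≠ 0)
    (h : g x * f' = f x * g') : HasDerivAt (fun y => f y / g y) 0 x := by
  have hzero : (f' * g x - f x * g') / g x ^ 2 = 0 := by
    rw [mul_comm f', h, sub_self, zero_div]
  simpa only [hzero] using hf.fun_div hg hx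

theorem IsOpen.is_const_of_hasDerivAt_zero {𝕜 G : Type*} [RCLike 𝕜] [NormedAddCommGroup G]
    [NormedSpace 𝕜 G] {f : 𝕜 → G} {s : Set 𝕜} (hs : IsOpen s) (hs' : IsPreconnected s)
    (hf : ∀ x ∈ s, HasDerivAt f 0 x) {x y : 𝕜} (hx : x ∈ s) (hy : y ∈ s) : f x = f y :=
  hs.is_const_of_deriv_eq_zero hs' (fun z hz => (hf z hz).differentiableAt.differentiableWithinAt)
    (fun z hz => (hf z hz).deriv) hx hy

/-- The equation `g ∂₁∂₂g = ∂₁g ∂₂g`, i.e. `∂₁∂₂ log g = 0` where `g ≠ 0`. -/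
def LogMixedPartialVanishesOn (𝕜 : Type*) [NontriviallyNormedField 𝕜] (g : 𝕜 × 𝕜 → 𝕜)
    (S : Set (𝕜 × 𝕜)) : Prop :=
  ∀ p ∈ S, g p * fderiv 𝕜 (fun q => fderiv 𝕜 g q (1, 0)) p (0, 1) =
    fderiv 𝕜 g p (1, 0) * fderiv 𝕜 g p (0, 1)

section Separation

variable {𝕜 : Type*} [RCLike 𝕜] {U V : Set 𝕜} {g : 𝕜 × 𝕜 → 𝕜}

theorem LogMixedPartialVanishesOn.mul_fderiv_fst_eq (hV : IsOpen V) (hV' : IsPreconnected V)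
    (hg : ∀ p ∈ U ×ˢ V, DifferentiableAt 𝕜 g p)
    (hG : ∀ p ∈ U ×ˢ V, DifferentiableAt 𝕜 (fun q => fderiv 𝕜 g q (1, 0)) p)
    (hg0 : ∀ p ∈ U ×ˢ V, g p ≠ 0) (hpde : LogMixedPartialVanishesOn 𝕜 g (U ×ˢ V))
    {z w b : 𝕜} (hz : z ∈ U) (hw : w ∈ V) (hb : b ∈ V) :
    g (z, b) * fderiv 𝕜 g (z, w) (1, 0) = g (z, w) * fderiv 𝕜 g (z, b) (1, 0) := by
  have hconst : ∀ y ∈ V,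
      HasDerivAt (fun y => fderiv 𝕜 g (z, y) (1, 0) / g (z, y)) 0 y := fun y hy =>
    (hG (z, y) ⟨hz, hy⟩).hasFDerivAt.hasDerivAt_snd_slice.div_of_mul_eq_mul
      (hg (z, y) ⟨hz, hy⟩).hasFDerivAt.hasDerivAt_snd_slice (hg0 (z, y) ⟨hz, hy⟩)
      (hpde (z, y) ⟨hz, hy⟩)
  have h := hV.is_const_of_hasDerivAt_zero hV' hconst hw hb
  rw [div_eq_div_iff (hg0 _ ⟨hz, hw⟩) (hg0 _ ⟨hz, hb⟩)] at h
  linear_combination h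

theorem LogMixedPartialVanishesOn.mul_eq_mul (hU : IsOpen U) (hU' : IsPreconnected U)
    (hV : IsOpen V) (hV' : IsPreconnected V)
    (hg : ∀ p ∈ U ×ˢ V, DifferentiableAt 𝕜 g p)
    (hG : ∀ p ∈ U ×ˢ V, DifferentiableAt 𝕜 (fun q => fderiv 𝕜 g q (1, 0)) p)
    (hg0 : ∀ p ∈ U ×ˢ V, g p ≠ 0) (hpde : LogMixedPartialVanishesOn 𝕜 g (U ×ˢ V))
    {a b z w : 𝕜} (ha : a ∈ U) (hb : b ∈ V) (hz : z ∈ U) (hw : w ∈ V) :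
    g (z, w) * g (a, b) = g (z, b) * g (a, w) := by
  have hconst : ∀ x ∈ U, HasDerivAt (fun x => g (x, w) / g (x, b)) 0 x := fun x hx =>
    (hg (x, w) ⟨hx, hw⟩).hasFDerivAt.hasDerivAt_fst_slice.div_of_mul_eq_mul
      (hg (x, b) ⟨hx, hb⟩).hasFDerivAt.hasDerivAt_fst_slice (hg0 (x, b) ⟨hx, hb⟩)
      (hpde.mul_fderiv_fst_eq hV hV' hg hG hg0 hx hw hb)
  have h := hU.is_const_of_hasDerivAt_zero hU' hconst hz ha
  rw [div_eq_div_iff (hg0 _ ⟨hz, hb⟩) (hg0 _ ⟨ha, hb⟩)] at h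
  linear_combination h

end Separation

section Product

variable {𝕜 : Type*} [NontriviallyNormedField 𝕜] {f₁ f₂ : 𝕜 → 𝕜} {p : 𝕜 × 𝕜}

theorem differentiableAt_mul_prod (h₁ : DifferentiableAt 𝕜 f₁ p.1)
    (h₂ : DifferentiableAt 𝕜 f₂ p.2) :
    DifferentiableAt 𝕜 (fun q : 𝕜 × 𝕜 => f₁ q.1 * f₂ q.2) p :=
  (h₁.comp p differentiableAt_fst).fun_mul (h₂.comp p differentiableAt_snd)

theorem fderiv_mul_prod_apply_one_zero (h₁ : DifferentiableAt 𝕜 f₁ p.1)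
    (h₂ : DifferentiableAt 𝕜 f₂ p.2) :
    fderiv 𝕜 (fun q : 𝕜 × 𝕜 => f₁ q.1 * f₂ q.2) p (1, 0) = deriv f₁ p.1 * f₂ p.2 :=
  (differentiableAt_mul_prod h₁ h₂).hasFDerivAt.hasDerivAt_fst_slice.unique
    (h₁.hasDerivAt.mul_const (f₂ p.2))

theorem fderiv_mul_prod_apply_zero_one (h₁ : DifferentiableAt 𝕜 f₁ p.1)
    (h₂ : DifferentiableAt 𝕜 f₂ p.2) :
    fderiv 𝕜 (fun q : 𝕜 × 𝕜 => f₁ q.1 * f₂ q.2) p (0, 1) = f₁ p.1 * deriv f₂ p.2 :=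
  (differentiableAt_mul_prod h₁ h₂).hasFDerivAt.hasDerivAt_snd_slice.unique
    (h₂.hasDerivAt.const_mul (f₁ p.1))

theorem logMixedPartialVanishesOn_of_eqOn_mul {U V : Set 𝕜} {g : 𝕜 × 𝕜 → 𝕜}
    (hU : IsOpen U) (hV : IsOpen V) (hf₁ : ∀ z ∈ U, DifferentiableAt 𝕜 f₁ z)
    (hf₁' : ∀ z ∈ U, DifferentiableAt 𝕜 (deriv f₁) z) (hf₂ : ∀ z ∈ V, DifferentiableAt 𝕜 f₂ z)
    (hfg : EqOn g (fun q => f₁ q.1 * f₂ q.2) (U ×ˢ V)) :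
    LogMixedPartialVanishesOn 𝕜 g (U ×ˢ V) := by
  have hfderiv : ∀ q ∈ U ×ˢ V, fderiv 𝕜 g q = fderiv 𝕜 (fun q => f₁ q.1 * f₂ q.2) q :=
    fun q hq => (hfg.eventuallyEq_of_mem ((hU.prod hV).mem_nhds hq)).fderiv_eq
  have hfst : EqOn (fun q => fderiv 𝕜 g q (1, 0)) (fun q => deriv f₁ q.1 * f₂ q.2) (U ×ˢ V) :=
    fun q hq => by
      simp only [hfderiv q hq, fderiv_mul_prod_apply_one_zero (hf₁ q.1 hq.1) (hf₂ q.2 hq.2)]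
  intro p hp
  rw [(hfst.eventuallyEq_of_mem ((hU.prod hV).mem_nhds hp)).fderiv_eq, hfderiv p hp, hfg hp,
    fderiv_mul_prod_apply_one_zero (hf₁ p.1 hp.1) (hf₂ p.2 hp.2),
    fderiv_mul_prod_apply_zero_one (hf₁ p.1 hp.1) (hf₂ p.2 hp.2),
    fderiv_mul_prod_apply_zero_one (hf₁' p.1 hp.1) (hf₂ p.2 hp.2)]
  ring

end Product

/-- **Vanishing of the complexified Gaussian curvature characterizes splitting of
the coefficient.** A nowhere-vanishing analytic function `g` on a polydisc
`Δ_r × Δ_s` satisfies `g·∂²g/∂z₁∂z₂ = (∂g/∂z₁)·(∂g/∂z₂)` (i.e. `∂²(log g)/∂z₁∂z₂ = 0`)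
if and only if `g(z₁,z₂) = f₁(z₁)·f₂(z₂)` for analytic functions `f₁`, `f₂` on the
respective discs. -/
theorem curvature_zero_iff_product
    (r s : ℝ) (hr : 0 < r) (hs : 0 < s)
    (g : ℂ × ℂ → ℂ)
    (hg : AnalyticOnNhd ℂ g {p : ℂ × ℂ | ‖p.1‖ < r ∧ ‖p.2‖ < s})
    (hg0 : ∀ p : ℂ × ℂ, ‖p.1‖ < r → ‖p.2‖ < s → g p ≠ 0) :
    (∀ p : ℂ × ℂ, ‖p.1‖ < r → ‖p.2‖ < s →
        g p * fderiv ℂ (fun q : ℂ × ℂ => fderiv ℂ g q (1, 0)) p (0, 1) =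
          fderiv ℂ g p (1, 0) * fderiv ℂ g p (0, 1)) ↔
    (∃ f₁ f₂ : ℂ → ℂ,
        AnalyticOnNhd ℂ f₁ {z : ℂ | ‖z‖ < r} ∧
        AnalyticOnNhd ℂ f₂ {z : ℂ | ‖z‖ < s} ∧
        ∀ p : ℂ × ℂ, ‖p.1‖ < r → ‖p.2‖ < s →
          g p = f₁ p.1 * f₂ p.2) := by
  have hU : IsOpen {z : ℂ | ‖z‖ < r} := ball_zero_eq (E := ℂ) r ▸ Metric.isOpen_ball
  have hV : IsOpen {z : ℂ | ‖z‖ < s} := ball_zero_eq (E := ℂ) s ▸ Metric.isOpen_ball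
  have hU' : IsPreconnected {z : ℂ | ‖z‖ < r} :=
    ball_zero_eq (E := ℂ) r ▸ (convex_ball 0 r).isPreconnected
  have hV' : IsPreconnected {z : ℂ | ‖z‖ < s} :=
    ball_zero_eq (E := ℂ) s ▸ (convex_ball 0 s).isPreconnected
  have h0r : ‖(0 : ℂ)‖ < r := by simpa using hr
  have h0s : ‖(0 : ℂ)‖ < s := by simpa using hs
  constructor
  · intro hpde
    refine ⟨fun z => g (z, 0), fun w => g (0, w) / g (0, 0), fun z hz => ?_, fun w hw => ?_,
      fun p h1 h2 => ?_⟩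
    · exact (hg (z, 0) ⟨hz, h0s⟩).comp (f := (·, 0)) (analyticAt_id.prod analyticAt_const)
    · exact ((hg (0, w) ⟨h0r, hw⟩).comp (f := (0, ·))
        (analyticAt_const.prod analyticAt_id)).div_const
    · rw [mul_div_assoc', eq_div_iff (hg0 (0, 0) h0r h0s)]
      exact LogMixedPartialVanishesOn.mul_eq_mul hU hU' hV hV'
        (fun p hp => (hg p hp).differentiableAt)
        (fun p hp => ((ContinuousLinearMap.apply ℂ ℂ ((1, 0) : ℂ × ℂ)).analyticAt _).comp
          (hg.fderiv p hp) |>.differentiableAt)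
        (fun p hp => hg0 p hp.1 hp.2) (fun p hp => hpde p hp.1 hp.2) h0r h0s h1 h2
  · rintro ⟨f₁, f₂, hf₁, hf₂, hfg⟩ p h1 h2
    exact logMixedPartialVanishesOn_of_eqOn_mul hU hV (fun z hz => (hf₁ z hz).differentiableAt)
      (fun z hz => (hf₁.deriv z hz).differentiableAt) (fun z hz => (hf₂ z hz).differentiableAt)
      (fun q hq => hfg q hq.1 hq.2) p ⟨h1, h2⟩
end

section
/- Let U ⊆ ℂⁿ be a connected open set and let μ₁,…,μ_m and η₁,…,η_m be closed holomorphic 1-forms on U such that: (i) μ₁⊙⋯⊙μ_m = η₁⊙⋯⊙η_m on U; (ii) ηᵢ ∧ μᵢ ≡ 0 on U for each i = 1,…,m; and (iii) for every nonempty connected open subset V ⊆ U, the only analytic functions f₁,…,f_m on V satisfying Σᵢ fᵢ·μᵢ = 0 on V and dfᵢ ∧ μᵢ ≡ 0 on V for all i are f₁ = ⋯ = f_m = 0. Then there exist nonzero constants c₁,…,c_m ∈ ℂ with c₁·c₂·⋯·c_m = 1 such that ηᵢ = cᵢ·μᵢ on U for each i. -/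
/-!
Where every `μᵢ` is nonzero, `ηᵢ ∧ μᵢ = 0` writes `ηᵢ = gᵢ μᵢ` with `gᵢ` holomorphic, and
evaluating `μ₁⊙⋯⊙μ_m = η₁⊙⋯⊙η_m` on a diagonal vector gives `∏ gᵢ = 1`. Since `ηᵢ` and `μᵢ` are
closed, `dgᵢ ∧ μᵢ = 0`, i.e. `dgᵢ = fᵢ gᵢ μᵢ`. The `fᵢ` form an abelian relation:
`∑ fᵢ μᵢ = d log ∏ gᵢ = 0`, and `fᵢ μᵢ = d log gᵢ` is closed, whence `dfᵢ ∧ μᵢ = 0`. Trivial abelian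
rank forces `fᵢ = 0`, so the `gᵢ` are constant, and the identity theorem carries `ηᵢ = cᵢ μᵢ` to
all of `U`. A ball on which no `μᵢ` vanishes exists because trivial abelian rank already forbids
`μᵢ ≡ 0` on any open set.
-/

open Filter Topology Set Metric
open scoped ContDiff

theorem IsOpen.subset_closure_inter_iInter {X ι : Type*} [TopologicalSpace X] [Finite ι]
    {U : Set X} {N : ι → Set X} (hU : IsOpen U) (hN : ∀ i, IsOpen (N i))
    (hUN : ∀ i, U ⊆ closure (N i)) : U ⊆ closure (U ∩ ⋂ i, N i) := by
  classical
  have := Fintype.ofFinite ι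
  have key : ∀ s : Finset ι, U ⊆ closure (U ∩ ⋂ i ∈ s, N i) := by
    intro s
    induction s using Finset.induction_on with
    | empty => simpa using subset_closure
    | insert a s _ ih =>
      have hopen : IsOpen (U ∩ ⋂ i ∈ s, N i) := hU.inter (isOpen_biInter_finset fun i _ => hN i)
      calc U ⊆ closure ((U ∩ ⋂ i ∈ s, N i) ∩ closure (N a)) :=
            ih.trans (closure_mono fun y hy => ⟨hy, hUN a hy.1⟩)
        _ ⊆ closure ((U ∩ ⋂ i ∈ s, N i) ∩ N a) :=
            closure_minimal hopen.inter_closure isClosed_closure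
        _ = closure (U ∩ ⋂ i ∈ insert a s, N i) := by
            rw [Finset.set_biInter_insert, inter_comm (N a), inter_assoc]
  simpa using key Finset.univ

theorem ne_zero_of_prod_eq_one {ι M₀ : Type*} [CommMonoidWithZero M₀] [Nontrivial M₀]
    {s : Finset ι} {f : ι → M₀} (h : ∏ i ∈ s, f i = 1) {i : ι} (hi : i ∈ s) : f i ≠ 0 :=
  fun h0 => by simp [Finset.prod_eq_zero hi h0] at h

theorem prod_eq_prod_of_sum_perm_prod_eq {R M ι : Type*} [CommRing R] [IsDomain R] [CharZero R]
    [Fintype ι] [DecidableEq ι] {φ ψ : ι → M → R}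
    (h : ∀ u : ι → M,
      ∑ σ : Equiv.Perm ι, ∏ i, φ i (u (σ i)) = ∑ σ : Equiv.Perm ι, ∏ i, ψ i (u (σ i)))
    (v : M) : ∏ i, φ i v = ∏ i, ψ i v := by
  have hv := h fun _ => v
  simp only [Finset.sum_const, Finset.card_univ, nsmul_eq_mul] at hv
  exact mul_left_cancel₀ (Nat.cast_ne_zero.2 Fintype.card_ne_zero) hv

section Forms

variable {𝕜 E : Type*} [NontriviallyNormedField 𝕜] [NormedAddCommGroup E] [NormedSpace 𝕜 E]

def WedgeEqZero (ψ φ : E →L[𝕜] 𝕜) : Prop :=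
  ∀ u v, ψ u * φ v = ψ v * φ u

def IsClosedFormAt (θ : E → E →L[𝕜] 𝕜) (x : E) : Prop :=
  ∀ u v, fderiv 𝕜 θ x u v = fderiv 𝕜 θ x v u

theorem WedgeEqZero.eq_div_smul {ψ φ : E →L[𝕜] 𝕜} (h : WedgeEqZero ψ φ) {v : E}
    (hv : φ v ≠ 0) : ψ = (ψ v / φ v) • φ := by
  ext u
  simp only [FunLike.coe_smul, Pi.smul_apply, smul_eq_mul]
  field_simp
  linear_combination h u v

theorem WedgeEqZero.of_fderiv_mul {f g : E → 𝕜} {x : E} {φ : E →L[𝕜] 𝕜}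
    (hfg : WedgeEqZero (fderiv 𝕜 (fun y => f y * g y) x) φ) (hg : WedgeEqZero (fderiv 𝕜 g x) φ)
    (hfd : DifferentiableAt 𝕜 f x) (hgd : DifferentiableAt 𝕜 g x) (hgx : g x ≠ 0) :
    WedgeEqZero (fderiv 𝕜 f x) φ := by
  intro u v
  have h := hfg u v
  rw [fderiv_fun_mul hfd hgd] at h
  simp only [add_apply, FunLike.coe_smul, Pi.smul_apply, smul_eq_mul] at h
  refine mul_left_cancel₀ hgx ?_
  linear_combination h - f x * hg u v

theorem IsClosedFormAt.wedgeEqZero_of_eventuallyEq_smul {θ μ : E → E →L[𝕜] 𝕜} {g : E → 𝕜}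
    {x : E} (hθ : IsClosedFormAt θ x) (hμ : IsClosedFormAt μ x)
    (hθg : θ =ᶠ[𝓝 x] fun y => g y • μ y) (hg : DifferentiableAt 𝕜 g x)
    (hμd : DifferentiableAt 𝕜 μ x) : WedgeEqZero (fderiv 𝕜 g x) (μ x) := by
  intro u v
  have hsymm := hθ u v
  rw [hθg.fderiv_eq, fderiv_fun_smul hg hμd] at hsymm
  simp only [add_apply, FunLike.coe_smul, Pi.smul_apply, ContinuousLinearMap.smulRight_apply,
    smul_eq_mul] at hsymm
  linear_combination hsymm - g x * hμ u v

theorem isClosedFormAt_fderiv [CompleteSpace 𝕜] {g : E → 𝕜} {x : E} (hg : AnalyticAt 𝕜 g x) :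
    IsClosedFormAt (fderiv 𝕜 g) x :=
  (hg.contDiffAt (n := ω)).isSymmSndFDerivAt le_top

theorem sum_smul_eq_zero_of_prod_eq_one {ι : Type*} [Fintype ι] {g : ι → E → 𝕜}
    {a : ι → 𝕜} {μ : ι → E →L[𝕜] 𝕜} {x : E} (hprod : (fun y => ∏ i, g i y) =ᶠ[𝓝 x] fun _ => 1)
    (hg : ∀ i, DifferentiableAt 𝕜 (g i) x) (hdg : ∀ i, fderiv 𝕜 (g i) x = (a i * g i x) • μ i) :
    ∑ i, a i • μ i = 0 := by
  classical
  calc ∑ i, a i • μ i = ∑ i, (∏ j ∈ Finset.univ.erase i, g j x) • fderiv 𝕜 (g i) x := by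
        refine Finset.sum_congr rfl fun i _ => ?_
        rw [hdg, smul_smul, mul_left_comm, Finset.prod_erase_mul _ _ (Finset.mem_univ i),
          hprod.eq_of_nhds, mul_one]
    _ = fderiv 𝕜 (fun y => ∏ i, g i y) x := (fderiv_finsetProd fun i _ => hg i).symm
    _ = 0 := by rw [hprod.fderiv_eq, fderiv_const_apply]

theorem AnalyticOnNhd.apply_div_apply [CompleteSpace 𝕜] {ψ φ : E → E →L[𝕜] 𝕜} {s : Set E}
    (hψ : AnalyticOnNhd 𝕜 ψ s) (hφ : AnalyticOnNhd 𝕜 φ s) {v : E} (hv : ∀ y ∈ s, φ y v ≠ 0) :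
    AnalyticOnNhd 𝕜 (fun y => ψ y v / φ y v) s := fun y hy =>
  (((ContinuousLinearMap.apply 𝕜 𝕜 v).analyticAt _).comp (hψ y hy)).div
    (((ContinuousLinearMap.apply 𝕜 𝕜 v).analyticAt _).comp (hφ y hy)) (hv y hy)

end Forms

section AbelianRank

variable {𝕜 E ι : Type*} [NontriviallyNormedField 𝕜] [NormedAddCommGroup E] [NormedSpace 𝕜 E]
  [Fintype ι]

def IsAbelianRelation (μ : ι → E → E →L[𝕜] 𝕜) (V : Set E) (f : ι → E → 𝕜) : Prop :=
  (∀ i, AnalyticOnNhd 𝕜 (f i) V) ∧ (∀ x ∈ V, ∑ i, f i x • μ i x = 0) ∧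
    ∀ i, ∀ x ∈ V, WedgeEqZero (fderiv 𝕜 (f i) x) (μ i x)

def HasTrivialAbelianRankOn (μ : ι → E → E →L[𝕜] 𝕜) (V : Set E) : Prop :=
  ∀ f, IsAbelianRelation μ V f → ∀ i, ∀ x ∈ V, f i x = 0

theorem HasTrivialAbelianRankOn.exists_ne_zero {μ : ι → E → E →L[𝕜] 𝕜} {V : Set E}
    (h : HasTrivialAbelianRankOn μ V) (hV : V.Nonempty) (i : ι) : ∃ x ∈ V, μ i x ≠ 0 := by
  classical
  by_contra! hμ
  obtain ⟨x, hx⟩ := hV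
  let δ : ι → E → 𝕜 := fun j _ => Pi.single (M := fun _ => 𝕜) i 1 j
  have hrel : IsAbelianRelation μ V δ :=
    ⟨fun j => analyticOnNhd_const, fun y hy => by simp [δ, hμ y hy], fun j y _ u v => by simp [δ]⟩
  simpa [δ] using h δ hrel i x hx

theorem exists_ball_forall_apply_ne_zero {μ : ι → E → E →L[𝕜] 𝕜} {U : Set E} (hU : IsOpen U)
    (hUne : U.Nonempty) (hμ : ∀ i, ContinuousOn (μ i) U)
    (hab : ∀ x, ∀ r > 0, ball x r ⊆ U → HasTrivialAbelianRankOn μ (ball x r)) :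
    ∃ x₀ v, ∃ r > 0, ball x₀ r ⊆ U ∧ ∀ i, ∀ y ∈ ball x₀ r, μ i y v ≠ 0 := by
  have hdense : ∀ i, U ⊆ closure (U ∩ μ i ⁻¹' {0}ᶜ) := by
    intro i x hx
    refine Metric.mem_closure_iff.2 fun ε hε => ?_
    obtain ⟨r, hr, hrU⟩ := Metric.isOpen_iff.1 hU x hx
    have hsub : ball x (min ε r) ⊆ U := (ball_subset_ball (min_le_right ε r)).trans hrU
    obtain ⟨y, hy, hμy⟩ := (hab x _ (lt_min hε hr) hsub).exists_ne_zero
      ⟨x, mem_ball_self (lt_min hε hr)⟩ i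
    exact ⟨y, ⟨hsub hy, hμy⟩, (mem_ball'.1 hy).trans_le (min_le_left ε r)⟩
  obtain ⟨x₀, hx₀U, hx₀⟩ : (U ∩ ⋂ i, U ∩ μ i ⁻¹' {0}ᶜ).Nonempty :=
    closure_nonempty_iff.1 (hUne.mono (hU.subset_closure_inter_iInter
      (fun i => (hμ i).isOpen_inter_preimage hU isOpen_compl_singleton) hdense))
  obtain ⟨v, hv⟩ := Module.Dual.exists_forall_ne_zero_of_forall_exists
    (fun i => (μ i x₀ : E →ₗ[𝕜] 𝕜)) fun i => by
      simpa [DFunLike.ne_iff] using (mem_iInter.1 hx₀ i).2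
  have hnear : ∀ᶠ y in 𝓝 x₀, y ∈ U ∧ ∀ i, μ i y v ≠ 0 :=
    (hU.eventually_mem hx₀U).and (eventually_all.2 fun i =>
      (((hμ i).continuousAt (hU.mem_nhds hx₀U)).clm_apply continuousAt_const).eventually_ne
        (hv i))
  obtain ⟨r, hr, hball⟩ := Metric.eventually_nhds_iff_ball.1 hnear
  exact ⟨x₀, v, r, hr, fun y hy => (hball y hy).1, fun i y hy => (hball y hy).2 i⟩

theorem isAbelianRelation_of_prod_eq_one [CompleteSpace 𝕜] {μ : ι → E → E →L[𝕜] 𝕜}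
    {g : ι → E → 𝕜} {V : Set E} {v : E} (hV : IsOpen V) (hμ : ∀ i, AnalyticOnNhd 𝕜 (μ i) V)
    (hμcl : ∀ i, ∀ x ∈ V, IsClosedFormAt (μ i) x) (hv : ∀ i, ∀ x ∈ V, μ i x v ≠ 0)
    (hg : ∀ i, AnalyticOnNhd 𝕜 (g i) V)
    (hdg : ∀ i, ∀ x ∈ V, WedgeEqZero (fderiv 𝕜 (g i) x) (μ i x))
    (hprod : ∀ x ∈ V, ∏ i, g i x = 1) :
    IsAbelianRelation μ V fun i x => fderiv 𝕜 (g i) x v / μ i x v / g i x := by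
  set f : ι → E → 𝕜 := fun i x => fderiv 𝕜 (g i) x v / μ i x v / g i x
  have hg0 : ∀ i, ∀ x ∈ V, g i x ≠ 0 := fun i x hx =>
    ne_zero_of_prod_eq_one (hprod x hx) (Finset.mem_univ i)
  have hf : ∀ i, AnalyticOnNhd 𝕜 (f i) V := fun i x hx =>
    ((hg i).fderiv.apply_div_apply (hμ i) (hv i) x hx).div (hg i x hx) (hg0 i x hx)
  have hdg_eq : ∀ i, ∀ x ∈ V, fderiv 𝕜 (g i) x = (f i x * g i x) • μ i x := fun i x hx => by
    rw [div_mul_cancel₀ _ (hg0 i x hx)]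
    exact (hdg i x hx).eq_div_smul (hv i x hx)
  refine ⟨hf, fun x hx => ?_, fun i x hx => ?_⟩
  · exact sum_smul_eq_zero_of_prod_eq_one (eventually_of_mem (hV.mem_nhds hx) hprod)
      (fun i => (hg i x hx).differentiableAt) (fun i => hdg_eq i x hx)
  · have hdfg : WedgeEqZero (fderiv 𝕜 (fun y => f i y * g i y) x) (μ i x) :=
      (isClosedFormAt_fderiv (hg i x hx)).wedgeEqZero_of_eventuallyEq_smul (hμcl i x hx)
        (eventually_of_mem (hV.mem_nhds hx) fun y hy => hdg_eq i y hy)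
        ((hf i x hx).differentiableAt.mul (hg i x hx).differentiableAt)
        (hμ i x hx).differentiableAt
    exact hdfg.of_fderiv_mul (hdg i x hx) (hf i x hx).differentiableAt
      (hg i x hx).differentiableAt (hg0 i x hx)

end AbelianRank

theorem HasTrivialAbelianRankOn.eq_of_prod_eq_one {E ι : Type*} [NormedAddCommGroup E]
    [NormedSpace ℂ E] [Fintype ι] {μ : ι → E → E →L[ℂ] ℂ} {g : ι → E → ℂ} {V : Set E} {v : E}
    (hab : HasTrivialAbelianRankOn μ V) (hV : IsOpen V) (hVc : IsPreconnected V)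
    (hμ : ∀ i, AnalyticOnNhd ℂ (μ i) V) (hμcl : ∀ i, ∀ x ∈ V, IsClosedFormAt (μ i) x)
    (hv : ∀ i, ∀ x ∈ V, μ i x v ≠ 0) (hg : ∀ i, AnalyticOnNhd ℂ (g i) V)
    (hdg : ∀ i, ∀ x ∈ V, WedgeEqZero (fderiv ℂ (g i) x) (μ i x))
    (hprod : ∀ x ∈ V, ∏ i, g i x = 1) (i : ι) {x y : E} (hx : x ∈ V) (hy : y ∈ V) :
    g i x = g i y := by
  have hf0 := hab _ (isAbelianRelation_of_prod_eq_one hV hμ hμcl hv hg hdg hprod) i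
  refine hV.is_const_of_fderiv_eq_zero hVc (fun z hz => (hg i z hz).differentiableWithinAt)
    (fun z hz => ?_) hx hy
  have hcoeff : fderiv ℂ (g i) z v / μ i z v = 0 := by
    simpa [ne_zero_of_prod_eq_one (hprod z hz) (Finset.mem_univ i)] using hf0 z hz
  rw [(hdg i z hz).eq_div_smul (hv i z hz), hcoeff]
  simp

/-- **Uniqueness of holomorphic closed decompositions with trivial abelian rank.**
Let `U ⊆ ℂⁿ` be connected open, `μ₁,…,μ_m` and `η₁,…,η_m` closed holomorphic 1-forms
on `U` with `μ₁⊙⋯⊙μ_m = η₁⊙⋯⊙η_m`, `ηᵢ ∧ μᵢ ≡ 0`, and the decomposition `μ₁⋯μ_m` of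
trivial abelian rank.  Then `ηᵢ = cᵢ·μᵢ` for nonzero constants `cᵢ` with `∏ cᵢ = 1`. -/
theorem closed_decomposition_unique_up_to_constants
    (n m : ℕ)
    (U : Set (Fin n → ℂ)) (hUopen : IsOpen U) (hUconn : IsConnected U)
    (μ η : Fin m → ((Fin n → ℂ) → (Fin n → ℂ) →L[ℂ] ℂ))
    (hμan : ∀ i, AnalyticOnNhd ℂ (μ i) U)
    (hηan : ∀ i, AnalyticOnNhd ℂ (η i) U)
    (hμcl : ∀ i, ∀ x ∈ U, ∀ u v : Fin n → ℂ,
      fderiv ℂ (μ i) x u v = fderiv ℂ (μ i) x v u)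
    (hηcl : ∀ i, ∀ x ∈ U, ∀ u v : Fin n → ℂ,
      fderiv ℂ (η i) x u v = fderiv ℂ (η i) x v u)
    (hprod : ∀ x ∈ U, ∀ u : Fin m → (Fin n → ℂ),
      ∑ σ : Equiv.Perm (Fin m), ∏ i, μ i x (u (σ i)) =
        ∑ σ : Equiv.Perm (Fin m), ∏ i, η i x (u (σ i)))
    (hwedge : ∀ i, ∀ x ∈ U, ∀ u v : Fin n → ℂ,
      η i x u * μ i x v = η i x v * μ i x u)
    (habelian : ∀ V : Set (Fin n → ℂ), IsOpen V → V.Nonempty → IsConnected V → V ⊆ U →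
      ∀ f : Fin m → ((Fin n → ℂ) → ℂ),
        (∀ i, AnalyticOnNhd ℂ (f i) V) →
        (∀ x ∈ V, ∑ i, f i x • μ i x = (0 : (Fin n → ℂ) →L[ℂ] ℂ)) →
        (∀ i, ∀ x ∈ V, ∀ u v : Fin n → ℂ,
          fderiv ℂ (f i) x u * μ i x v = fderiv ℂ (f i) x v * μ i x u) →
        ∀ i, ∀ x ∈ V, f i x = 0) :
    ∃ c : Fin m → ℂ, (∀ i, c i ≠ 0) ∧ (∏ i, c i = 1) ∧
      ∀ i, ∀ x ∈ U, η i x = c i • μ i x := by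
  have hab : ∀ x, ∀ r > 0, ball x r ⊆ U → HasTrivialAbelianRankOn μ (ball x r) :=
    fun x r hr hrU f ⟨hf, hsum, hdf⟩ =>
      habelian _ isOpen_ball (nonempty_ball.2 hr) (isConnected_ball hr) hrU f hf hsum hdf
  obtain ⟨x₀, v, r, hr, hBU, hv⟩ := exists_ball_forall_apply_ne_zero hUopen hUconn.nonempty
    (fun i => (hμan i).continuousOn) hab
  have hx₀ : x₀ ∈ ball x₀ r := mem_ball_self hr
  set g : Fin m → (Fin n → ℂ) → ℂ := fun i y => η i y v / μ i y v
  have hg : ∀ i, AnalyticOnNhd ℂ (g i) (ball x₀ r) := fun i =>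
    ((hηan i).mono hBU).apply_div_apply ((hμan i).mono hBU) (hv i)
  have hηg : ∀ i, ∀ y ∈ ball x₀ r, η i y = g i y • μ i y := fun i y hy =>
    WedgeEqZero.eq_div_smul (hwedge i y (hBU hy)) (hv i y hy)
  have hprod_g : ∀ y ∈ ball x₀ r, ∏ i, g i y = 1 := fun y hy => by
    rw [Finset.prod_div_distrib, ← prod_eq_prod_of_sum_perm_prod_eq (hprod y (hBU hy)),
      div_self (Finset.prod_ne_zero_iff.2 fun i _ => hv i y hy)]
  have hdg : ∀ i, ∀ y ∈ ball x₀ r, WedgeEqZero (fderiv ℂ (g i) y) (μ i y) := fun i y hy =>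
    IsClosedFormAt.wedgeEqZero_of_eventuallyEq_smul (hηcl i y (hBU hy)) (hμcl i y (hBU hy))
      (eventually_of_mem (isOpen_ball.mem_nhds hy) (hηg i)) (hg i y hy).differentiableAt
      (hμan i y (hBU hy)).differentiableAt
  have hg_const : ∀ i, ∀ y ∈ ball x₀ r, g i y = g i x₀ := fun i y hy =>
    (hab x₀ r hr hBU).eq_of_prod_eq_one isOpen_ball (isConnected_ball hr).isPreconnected
      (fun i => (hμan i).mono hBU) (fun i x hx => hμcl i x (hBU hx)) hv hg hdg hprod_g i hy hx₀
  refine ⟨fun i => g i x₀, fun i => ne_zero_of_prod_eq_one (hprod_g x₀ hx₀) (Finset.mem_univ i),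
    hprod_g x₀ hx₀, fun i => ?_⟩
  refine (hηan i).eqOn_of_preconnected_of_eventuallyEq ((hμan i).const_smul (c := g i x₀))
    hUconn.isPreconnected (hBU hx₀) ?_
  filter_upwards [isOpen_ball.mem_nhds hx₀] with y hy
  rw [hηg i y hy, hg_const i y hy]
end

section
/- Let U ⊆ ℂ² be a connected open set and let μ₁, μ₂, η₁, η₂ be closed holomorphic 1-forms on U such that μ₁ ∧ μ₂ is not identically zero on U, η₁ ∧ μ₁ ≡ 0 and η₂ ∧ μ₂ ≡ 0 on U, and μ₁ ⊙ μ₂ = η₁ ⊙ η₂ on U. Then there exists c ∈ ℂ \ {0} such that η₁ = c·μ₁ and η₂ = c⁻¹·μ₂ on U. -/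
/-!
Where `μ₁ ∧ μ₂ ≠ 0`, the conditions `ηᵢ ∧ μᵢ = 0` give `η₁ = f μ₁`, `η₂ = g μ₂` locally, and
`μ₁ ⊙ μ₂ = η₁ ⊙ η₂` forces `f g = 1`. Closedness of `μᵢ` and `ηᵢ` gives `df ∧ μ₁ = 0` and
`dg ∧ μ₂ = 0`; since `f dg + g df = 0`, also `df ∧ μ₂ = 0`, so `df = 0` because `μ₁, μ₂` are
independent. Thus `f` is a constant `c` near such a point, and the identity principle for the
analytic forms `η₁ - c μ₁`, `η₂ - c⁻¹ μ₂` spreads this over the connected set `U`.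
-/

open Filter Topology

section Wedge

variable {M R : Type*} [CommRing R]

theorem exists_ne_zero_of_wedge_ne_zero {α β : M → R} {u v : M}
    (h : α u * β v - α v * β u ≠ 0) : (∃ a, α a ≠ 0) ∧ ∃ a, β a ≠ 0 := by
  constructor <;> by_contra! h0 <;> exact h (by simp [h0])

theorem eq_div_mul_of_wedge_eq_zero {K : Type*} [Field K] {η μ : M → K}
    (h : ∀ p q, η p * μ q = η q * μ p) {a : M} (ha : μ a ≠ 0) (w : M) :
    η w = η a / μ a * μ w := by
  rw [div_mul_eq_mul_div, eq_div_iff ha]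
  exact h w a

variable [IsDomain R]

theorem eq_zero_of_wedge_eq_zero {φ α β : M → R}
    (hα : ∀ p q, φ p * α q = φ q * α p) (hβ : ∀ p q, φ p * β q = φ q * β p) {u v : M}
    (hαβ : α u * β v - α v * β u ≠ 0) (w : M) : φ w = 0 := by
  have : φ w * (α u * β v - α v * β u) = 0 := by
    linear_combination β v * hα w u - β u * hα w v + α w * hβ u v
  exact (mul_eq_zero.mp this).resolve_right hαβ

/-- `α ⊙ β` cannot be annihilated by `1 - f g` where `α ∧ β ≠ 0`, because
`(α ∧ β)(u, v)² = (α ⊙ β)(u, v)² - (α ⊙ β)(u, u) (α ⊙ β)(v, v)`. -/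
theorem mul_eq_one_of_symmProd_eq {α β φ ψ : M → R} {f g : R}
    (hφ : ∀ p, φ p = f * α p) (hψ : ∀ p, ψ p = g * β p)
    (h : ∀ p q, α p * β q + α q * β p = φ p * ψ q + φ q * ψ p) {u v : M}
    (hαβ : α u * β v - α v * β u ≠ 0) : f * g = 1 := by
  have hS : ∀ p q, (1 - f * g) * (α p * β q + α q * β p) = 0 := by
    intro p q
    linear_combination (h p q).trans (by rw [hφ, hφ, hψ, hψ])
  have : (1 - f * g) * (α u * β v - α v * β u) ^ 2 = 0 := by
    linear_combination (α u * β v + α v * β u) * hS u v - (α v * β v + α v * β v) * hS u u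
  exact (sub_eq_zero.mp ((mul_eq_zero.mp this).resolve_right (pow_ne_zero 2 hαβ))).symm

end Wedge

section ClosedForms

variable {𝕜 E : Type*} [NontriviallyNormedField 𝕜] [NormedAddCommGroup E] [NormedSpace 𝕜 E]

theorem fderiv_wedge_eq_zero_of_eventuallyEq_smul {f : E → 𝕜} {μ η : E → E →L[𝕜] 𝕜} {x : E}
    (hη : η =ᶠ[𝓝 x] fun y => f y • μ y) (hf : DifferentiableAt 𝕜 f x)
    (hμ : DifferentiableAt 𝕜 μ x) (hμcl : ∀ u v, fderiv 𝕜 μ x u v = fderiv 𝕜 μ x v u)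
    (hηcl : ∀ u v, fderiv 𝕜 η x u v = fderiv 𝕜 η x v u) (u v : E) :
    fderiv 𝕜 f x u * μ x v = fderiv 𝕜 f x v * μ x u := by
  have hsymm := hηcl u v
  rw [hη.fderiv_eq, fderiv_fun_smul hf hμ] at hsymm
  simp only [add_apply, smul_apply, ContinuousLinearMap.smulRight_apply, smul_eq_mul] at hsymm
  linear_combination hsymm - f x * hμcl u v

theorem fderiv_eq_zero_of_closed_decomposition {f g : E → 𝕜} {μ₁ μ₂ η₁ η₂ : E → E →L[𝕜] 𝕜}
    {x u v : E} (h₁ : η₁ =ᶠ[𝓝 x] fun y => f y • μ₁ y) (h₂ : η₂ =ᶠ[𝓝 x] fun y => g y • μ₂ y)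
    (hfg : (fun y => f y * g y) =ᶠ[𝓝 x] fun _ => 1) (hf : DifferentiableAt 𝕜 f x)
    (hg : DifferentiableAt 𝕜 g x) (hμ₁ : DifferentiableAt 𝕜 μ₁ x)
    (hμ₂ : DifferentiableAt 𝕜 μ₂ x)
    (hμ₁cl : ∀ u v, fderiv 𝕜 μ₁ x u v = fderiv 𝕜 μ₁ x v u)
    (hμ₂cl : ∀ u v, fderiv 𝕜 μ₂ x u v = fderiv 𝕜 μ₂ x v u)
    (hη₁cl : ∀ u v, fderiv 𝕜 η₁ x u v = fderiv 𝕜 η₁ x v u)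
    (hη₂cl : ∀ u v, fderiv 𝕜 η₂ x u v = fderiv 𝕜 η₂ x v u)
    (hD : μ₁ x u * μ₂ x v - μ₁ x v * μ₂ x u ≠ 0) : fderiv 𝕜 f x = 0 := by
  have hdf₁ := fderiv_wedge_eq_zero_of_eventuallyEq_smul h₁ hf hμ₁ hμ₁cl hη₁cl
  have hdg₂ := fderiv_wedge_eq_zero_of_eventuallyEq_smul h₂ hg hμ₂ hμ₂cl hη₂cl
  have hleibniz : f x • fderiv 𝕜 g x + g x • fderiv 𝕜 f x = 0 := by
    rw [← fderiv_fun_mul hf hg, hfg.fderiv_eq, fderiv_const_apply]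
  have hgx : g x ≠ 0 := right_ne_zero_of_mul_eq_one hfg.self_of_nhds
  have hdf₂ : ∀ p q, fderiv 𝕜 f x p * μ₂ x q = fderiv 𝕜 f x q * μ₂ x p := by
    intro p q
    have hp := congrArg (· p) hleibniz
    have hq := congrArg (· q) hleibniz
    simp only [add_apply, smul_apply, smul_eq_mul, zero_apply] at hp hq
    refine mul_left_cancel₀ hgx ?_
    linear_combination μ₂ x q * hp - μ₂ x p * hq - f x * hdg₂ p q
  exact ContinuousLinearMap.ext (eq_zero_of_wedge_eq_zero hdf₁ hdf₂ hD)

end ClosedForms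

theorem eventuallyEq_of_eventually_fderiv_eq_zero {𝕜 E F : Type*} [RCLike 𝕜]
    [NormedAddCommGroup E] [NormedSpace 𝕜 E] [NormedAddCommGroup F] [NormedSpace 𝕜 F]
    {f : E → F} {x : E} (h : ∀ᶠ y in 𝓝 x, DifferentiableAt 𝕜 f y ∧ fderiv 𝕜 f y = 0) :
    f =ᶠ[𝓝 x] fun _ => f x := by
  obtain ⟨r, hr, hball⟩ := Metric.eventually_nhds_iff_ball.mp h
  filter_upwards [Metric.ball_mem_nhds x hr] with y hy
  have : NormedSpace ℝ E := .restrictScalars ℝ 𝕜 E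
  exact Metric.isOpen_ball.is_const_of_fderiv_eq_zero (convex_ball x r).isPreconnected
    (fun z hz => (hball z hz).1.differentiableWithinAt) (fun z hz => (hball z hz).2) hy
    (Metric.mem_ball_self hr)

theorem eventually_eq_div_smul_of_wedge_eq_zero {𝕜 E : Type*} [NontriviallyNormedField 𝕜]
    [NormedAddCommGroup E] [NormedSpace 𝕜 E] {V : Set E} (hV : IsOpen V)
    {μ η : E → E →L[𝕜] 𝕜} (hμ : DifferentiableOn 𝕜 μ V) (hη : DifferentiableOn 𝕜 η V)
    (hw : ∀ x ∈ V, ∀ u v, η x u * μ x v = η x v * μ x u) {x₀ a : E} (hx₀ : x₀ ∈ V)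
    (ha : μ x₀ a ≠ 0) :
    ∀ᶠ x in 𝓝 x₀, η x = (η x a / μ x a) • μ x ∧
      DifferentiableAt 𝕜 (fun y => η y a / μ y a) x := by
  have hμa := ((hμ.differentiableAt (hV.mem_nhds hx₀)).continuousAt.clm_apply
    continuousAt_const).eventually_ne ha
  filter_upwards [hV.mem_nhds hx₀, hμa] with x hx hxa
  have := hμ.differentiableAt (hV.mem_nhds hx)
  have := hη.differentiableAt (hV.mem_nhds hx)
  exact ⟨ContinuousLinearMap.ext (eq_div_mul_of_wedge_eq_zero (hw x hx) hxa),
    by fun_prop (disch := assumption)⟩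

theorem exists_eventuallyEq_smul_of_closed_decomposition {𝕜 E : Type*} [RCLike 𝕜]
    [NormedAddCommGroup E] [NormedSpace 𝕜 E] {V : Set E} (hV : IsOpen V)
    {μ₁ μ₂ η₁ η₂ : E → E →L[𝕜] 𝕜}
    (hμ₁ : DifferentiableOn 𝕜 μ₁ V) (hμ₂ : DifferentiableOn 𝕜 μ₂ V)
    (hη₁ : DifferentiableOn 𝕜 η₁ V) (hη₂ : DifferentiableOn 𝕜 η₂ V)
    (hμ₁cl : ∀ x ∈ V, ∀ u v, fderiv 𝕜 μ₁ x u v = fderiv 𝕜 μ₁ x v u)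
    (hμ₂cl : ∀ x ∈ V, ∀ u v, fderiv 𝕜 μ₂ x u v = fderiv 𝕜 μ₂ x v u)
    (hη₁cl : ∀ x ∈ V, ∀ u v, fderiv 𝕜 η₁ x u v = fderiv 𝕜 η₁ x v u)
    (hη₂cl : ∀ x ∈ V, ∀ u v, fderiv 𝕜 η₂ x u v = fderiv 𝕜 η₂ x v u)
    (hw₁ : ∀ x ∈ V, ∀ u v, η₁ x u * μ₁ x v = η₁ x v * μ₁ x u)
    (hw₂ : ∀ x ∈ V, ∀ u v, η₂ x u * μ₂ x v = η₂ x v * μ₂ x u)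
    (hprod : ∀ x ∈ V, ∀ u v,
      μ₁ x u * μ₂ x v + μ₁ x v * μ₂ x u = η₁ x u * η₂ x v + η₁ x v * η₂ x u)
    {x₀ u v : E} (hx₀ : x₀ ∈ V) (hD : μ₁ x₀ u * μ₂ x₀ v - μ₁ x₀ v * μ₂ x₀ u ≠ 0) :
    ∃ c : 𝕜, c ≠ 0 ∧ η₁ =ᶠ[𝓝 x₀] c • μ₁ ∧ η₂ =ᶠ[𝓝 x₀] c⁻¹ • μ₂ := by
  obtain ⟨⟨a₁, ha₁⟩, a₂, ha₂⟩ := exists_ne_zero_of_wedge_ne_zero hD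
  set f := fun x => η₁ x a₁ / μ₁ x a₁
  set g := fun x => η₂ x a₂ / μ₂ x a₂
  have hV₀ := hV.mem_nhds hx₀
  have h₁ := eventually_eq_div_smul_of_wedge_eq_zero hV hμ₁ hη₁ hw₁ hx₀ ha₁
  have h₂ := eventually_eq_div_smul_of_wedge_eq_zero hV hμ₂ hη₂ hw₂ hx₀ ha₂
  have hDnear : ∀ᶠ x in 𝓝 x₀, μ₁ x u * μ₂ x v - μ₁ x v * μ₂ x u ≠ 0 := by
    have := (hμ₁.differentiableAt hV₀).continuousAt
    have := (hμ₂.differentiableAt hV₀).continuousAt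
    exact ContinuousAt.eventually_ne (by fun_prop) hD
  have hfg : ∀ᶠ x in 𝓝 x₀, f x * g x = 1 := by
    filter_upwards [hV₀, h₁, h₂, hDnear] with x hx hx₁ hx₂ hDx
    exact mul_eq_one_of_symmProd_eq (DFunLike.congr_fun hx₁.1) (DFunLike.congr_fun hx₂.1)
      (hprod x hx) hDx
  have hdf : ∀ᶠ x in 𝓝 x₀, DifferentiableAt 𝕜 f x ∧ fderiv 𝕜 f x = 0 := by
    filter_upwards [hV₀, h₁.eventually_nhds, h₂.eventually_nhds, hfg.eventually_nhds, hDnear]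
      with x hx hx₁ hx₂ hxfg hDx
    have hx' := hV.mem_nhds hx
    exact ⟨hx₁.self_of_nhds.2, fderiv_eq_zero_of_closed_decomposition (hx₁.mono fun _ h => h.1)
      (hx₂.mono fun _ h => h.1) hxfg hx₁.self_of_nhds.2 hx₂.self_of_nhds.2
      (hμ₁.differentiableAt hx') (hμ₂.differentiableAt hx') (hμ₁cl x hx) (hμ₂cl x hx)
      (hη₁cl x hx) (hη₂cl x hx) hDx⟩
  refine ⟨f x₀, left_ne_zero_of_mul_eq_one hfg.self_of_nhds, ?_, ?_⟩ <;>
    filter_upwards [h₁, h₂, hfg, eventuallyEq_of_eventually_fderiv_eq_zero hdf]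
      with x hx₁ hx₂ hxfg hfx
  · exact hx₁.1.trans (congrArg (· • μ₁ x) hfx)
  · rw [hfx] at hxfg
    exact hx₂.1.trans (congrArg (· • μ₂ x) (eq_inv_of_mul_eq_one_right hxfg))

/-- **Uniqueness of closed decompositions of a rank-2 symmetric 2-differential.**
Let `U ⊆ ℂ²` be connected open and `μ₁, μ₂, η₁, η₂` closed holomorphic 1-forms on `U`
with `μ₁ ∧ μ₂ ≢ 0`, `η₁ ∧ μ₁ ≡ 0`, `η₂ ∧ μ₂ ≡ 0`, and `μ₁ ⊙ μ₂ = η₁ ⊙ η₂`.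
Then `η₁ = c·μ₁` and `η₂ = c⁻¹·μ₂` for some `c ≠ 0`. -/
theorem closed_decomposition_rank_two_unique
    (U : Set (ℂ × ℂ)) (hUopen : IsOpen U) (hUconn : IsConnected U)
    (μ₁ μ₂ η₁ η₂ : ℂ × ℂ → (ℂ × ℂ) →L[ℂ] ℂ)
    (hμ₁an : AnalyticOnNhd ℂ μ₁ U) (hμ₂an : AnalyticOnNhd ℂ μ₂ U)
    (hη₁an : AnalyticOnNhd ℂ η₁ U) (hη₂an : AnalyticOnNhd ℂ η₂ U)
    (hμ₁cl : ∀ x ∈ U, ∀ u v : ℂ × ℂ, fderiv ℂ μ₁ x u v = fderiv ℂ μ₁ x v u)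
    (hμ₂cl : ∀ x ∈ U, ∀ u v : ℂ × ℂ, fderiv ℂ μ₂ x u v = fderiv ℂ μ₂ x v u)
    (hη₁cl : ∀ x ∈ U, ∀ u v : ℂ × ℂ, fderiv ℂ η₁ x u v = fderiv ℂ η₁ x v u)
    (hη₂cl : ∀ x ∈ U, ∀ u v : ℂ × ℂ, fderiv ℂ η₂ x u v = fderiv ℂ η₂ x v u)
    (hrank : ∃ x ∈ U, ∃ u v : ℂ × ℂ, μ₁ x u * μ₂ x v - μ₁ x v * μ₂ x u ≠ 0)
    (hw₁ : ∀ x ∈ U, ∀ u v : ℂ × ℂ, η₁ x u * μ₁ x v = η₁ x v * μ₁ x u)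
    (hw₂ : ∀ x ∈ U, ∀ u v : ℂ × ℂ, η₂ x u * μ₂ x v = η₂ x v * μ₂ x u)
    (hprod : ∀ x ∈ U, ∀ u v : ℂ × ℂ,
      μ₁ x u * μ₂ x v + μ₁ x v * μ₂ x u = η₁ x u * η₂ x v + η₁ x v * η₂ x u) :
    ∃ c : ℂ, c ≠ 0 ∧ ∀ x ∈ U, η₁ x = c • μ₁ x ∧ η₂ x = c⁻¹ • μ₂ x := by
  obtain ⟨x₀, hx₀, u, v, hD⟩ := hrank
  obtain ⟨c, hc, h₁, h₂⟩ := exists_eventuallyEq_smul_of_closed_decomposition hUopen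
    hμ₁an.differentiableOn hμ₂an.differentiableOn hη₁an.differentiableOn hη₂an.differentiableOn
    hμ₁cl hμ₂cl hη₁cl hη₂cl hw₁ hw₂ hprod hx₀ hD
  refine ⟨c, hc, fun x hx => ⟨?_, ?_⟩⟩
  · exact hη₁an.eqOn_of_preconnected_of_eventuallyEq
      (hμ₁an.const_smul (c := c)) hUconn.isPreconnected hx₀ h₁ hx
  · exact hη₂an.eqOn_of_preconnected_of_eventuallyEq
      (hμ₂an.const_smul (c := c⁻¹)) hUconn.isPreconnected hx₀ h₂ hx
end

section
/- Let ε > 0, let u be an analytic nowhere-vanishing function on the polydisc D = Δ_ε × Δ_ε ⊆ ℂ² (with coordinates (v₁,v₂)), and suppose ∂u/∂v₂(v₁,v₂) = v₁^m·h(v₁,v₂) on D, where m is a natural number and h is analytic on D with h(0,·) not identically zero on Δ_ε. Then there exist b with |b| < ε, an open neighborhood U ⊆ D of (0,b), and analytic functions z₁, z₂ on U such that: (i) (z₁(0,b), z₂(0,b)) = (0,0); (ii) the Jacobian determinant (∂z₁/∂v₁)(∂z₂/∂v₂) − (∂z₁/∂v₂)(∂z₂/∂v₁) is nowhere zero on U;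 (iii) z₁ = v₁·e on U for some analytic nowhere-vanishing function e on U (so {v₁=0} ∩ U = {z₁=0} ∩ U); and (iv) v₁·u(v₁,v₂) = z₁·(1 + z₁^m·z₂) at every point of U. -/
/-!
Pick `b` with `h (0, b) ≠ 0` and put `e (v₁) = u (v₁, b)`. The difference `u - e` vanishes on
`{v₂ = b}` and `∂(u - e)/∂v₂ = v₁ ^ m * h`. A function `f` with `f (v₁, b) = 0` and
`∂f/∂v₂ = v₁ ^ (k + 1) * h` is constant along `{v₁ = 0}`, hence vanishes there, hence is `v₁` times
an analytic function (read off the power series of `f`); iterating, `u = e + v₁ ^ m * G` with `G`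
analytic, `G (0, b) = 0` and `∂G/∂v₂ = h`. Then `z₁ = v₁ * e` and `z₂ = G / e ^ (m + 1)` satisfy
`v₁ * u = z₁ * (1 + z₁ ^ m * z₂)`, and since `z₁` does not depend on `v₂` the Jacobian is
`∂z₁/∂v₁ * h / e ^ (m + 1)`, which is nonzero near `(0, b)`.
-/

open Finset Filter Topology
open scoped NNReal ENNReal

section SeriesOnPlane

variable {𝕜 : Type*} [NontriviallyNormedField 𝕜]

namespace ContinuousMultilinearMap

variable (𝕜) in
def fstPowMulSndPow (n j : ℕ) : ContinuousMultilinearMap 𝕜 (fun _ : Fin n => 𝕜 × 𝕜) 𝕜 :=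
  (ContinuousMultilinearMap.mkPiAlgebraFin 𝕜 n 𝕜).compContinuousLinearMap fun i =>
    if (i : ℕ) < j then ContinuousLinearMap.fst 𝕜 𝕜 𝕜 else ContinuousLinearMap.snd 𝕜 𝕜 𝕜

theorem norm_fstPowMulSndPow_le (n j : ℕ) : ‖fstPowMulSndPow 𝕜 n j‖ ≤ 1 := by
  refine (norm_compContinuousLinearMap_le _ _).trans ?_
  rw [norm_mkPiAlgebraFin, one_mul]
  refine prod_le_one (fun _ _ => norm_nonneg _) fun i _ => ?_
  split
  · exact ContinuousLinearMap.norm_fst_le 𝕜 𝕜 𝕜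
  · exact ContinuousLinearMap.norm_snd_le 𝕜 𝕜 𝕜

theorem fstPowMulSndPow_apply_diag {n j : ℕ} (hj : j ≤ n) (x y : 𝕜) :
    (fstPowMulSndPow 𝕜 n j fun _ => (x, y)) = x ^ j * y ^ (n - j) := by
  have hfilter : (range n).filter (· < j) = range j := by
    ext i; simp only [mem_filter, mem_range]; omega
  have hfilter' : (range n).filter (¬ · < j) = Ico j n := by
    ext i; simp only [mem_filter, mem_range, mem_Ico]; omega
  simp only [fstPowMulSndPow, compContinuousLinearMap_apply, mkPiAlgebraFin_apply,
    List.prod_ofFn, apply_ite (fun L : 𝕜 × 𝕜 →L[𝕜] 𝕜 => L (x, y)),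
    ContinuousLinearMap.coe_fst', ContinuousLinearMap.coe_snd']
  rw [Fin.prod_univ_eq_prod_range (fun i => if i < j then x else y), prod_ite, prod_const,
    prod_const, hfilter, hfilter', card_range, Nat.card_Ico]

end ContinuousMultilinearMap

namespace FormalMultilinearSeries

open ContinuousMultilinearMap

variable (P : FormalMultilinearSeries 𝕜 (𝕜 × 𝕜) 𝕜)

/-- Expanding `P n ((x, y), …, (x, y))` multilinearly along `(x, y) = (x, 0) + (0, y)`, the
monomial `x ^ j * y ^ (n - j)` collects the terms in which `(x, 0)` fills a `j`-subset of the
slots. -/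
def monomialCoeff (n j : ℕ) : 𝕜 :=
  ∑ S ∈ powersetCard j (univ : Finset (Fin n)),
    P n (S.piecewise (fun _ => (1, 0)) fun _ => (0, 1))

theorem norm_monomialCoeff_le (n j : ℕ) : ‖P.monomialCoeff n j‖ ≤ n.choose j * ‖P n‖ := by
  calc ‖P.monomialCoeff n j‖
      ≤ ∑ _S ∈ powersetCard j (univ : Finset (Fin n)), ‖P n‖ := by
        refine (norm_sum_le _ _).trans (sum_le_sum fun S _ => ?_)
        refine ((P n).le_opNorm _).trans (le_of_eq ?_)
        rw [prod_eq_one fun i _ => ?_, mul_one]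
        by_cases hi : i ∈ S <;> simp [hi]
    _ = n.choose j * ‖P n‖ := by simp

theorem apply_diag_eq_sum_monomialCoeff (n : ℕ) (x y : 𝕜) :
    (P n fun _ => (x, y)) =
      ∑ j ∈ range (n + 1), P.monomialCoeff n j * (x ^ j * y ^ (n - j)) := by
  classical
  have hterm (S : Finset (Fin n)) :
      P n (S.piecewise (fun _ => (x, 0)) fun _ => (0, y)) =
        x ^ S.card * y ^ (n - S.card) * P n (S.piecewise (fun _ => (1, 0)) fun _ => (0, 1)) := by
    have hsmul : (S.piecewise (fun _ => ((x, 0) : 𝕜 × 𝕜)) fun _ => (0, y)) = fun i =>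
        S.piecewise (fun _ => x) (fun _ => y) i •
          S.piecewise (fun _ => ((1, 0) : 𝕜 × 𝕜)) (fun _ => (0, 1)) i := by
      ext i <;> by_cases hi : i ∈ S <;> simp [hi]
    rw [hsmul, (P n).map_smul_univ, prod_piecewise, smul_eq_mul]
    simp [card_univ_sdiff]
  calc (P n fun _ => (x, y))
      = ∑ S : Finset (Fin n), P n (S.piecewise (fun _ => (x, 0)) fun _ => (0, y)) := by
        rw [← (P n).map_add_univ]; congr 1; ext <;> simp
    _ = _ := by
        rw [← powerset_univ, sum_powerset]
        simp only [card_univ, Fintype.card_fin, monomialCoeff, sum_mul]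
        refine sum_congr rfl fun j _ => sum_congr rfl fun S hS => ?_
        rw [hterm, (mem_powersetCard.1 hS).2]
        ring

/-- The series of `(f (x, y) - f (0, y)) / x` when `P` is the series of `f`. -/
def divFst : FormalMultilinearSeries 𝕜 (𝕜 × 𝕜) 𝕜 :=
  fun n => ∑ j ∈ range (n + 1), P.monomialCoeff (n + 1) (j + 1) • fstPowMulSndPow 𝕜 n j

theorem divFst_apply_diag (n : ℕ) (x y : 𝕜) :
    (P.divFst n fun _ => (x, y)) =
      ∑ j ∈ range (n + 1), P.monomialCoeff (n + 1) (j + 1) * (x ^ j * y ^ (n - j)) := by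
  simp only [divFst, _root_.sum_apply]
  exact sum_congr rfl fun j hj => by
    rw [_root_.smul_apply, smul_eq_mul,
      fstPowMulSndPow_apply_diag (Nat.lt_succ_iff.1 (mem_range.1 hj))]

theorem apply_diag_succ_eq_add_fst_mul_divFst (n : ℕ) (v : 𝕜 × 𝕜) :
    (P (n + 1) fun _ => v) = (P (n + 1) fun _ => (0, v.2)) + v.1 * P.divFst n fun _ => v := by
  obtain ⟨x, y⟩ := v
  rw [P.apply_diag_eq_sum_monomialCoeff, P.apply_diag_eq_sum_monomialCoeff, divFst_apply_diag]
  rw [sum_range_succ' _ (n + 1), sum_range_succ' _ (n + 1), mul_sum]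
  simp only [zero_pow (Nat.succ_ne_zero _), zero_mul, mul_zero, sum_const_zero, pow_zero, zero_add,
    Nat.add_sub_add_right]
  rw [add_comm]
  congr 1
  exact sum_congr rfl fun j _ => by ring

theorem norm_divFst_le (n : ℕ) : ‖P.divFst n‖ ≤ 2 ^ (n + 1) * ‖P (n + 1)‖ := by
  calc ‖P.divFst n‖
      ≤ ∑ j ∈ range (n + 1), ((n + 1).choose (j + 1) : ℝ) * ‖P (n + 1)‖ := by
        refine (norm_sum_le _ _).trans (sum_le_sum fun j _ => ?_)
        refine (norm_smul_le (P.monomialCoeff (n + 1) (j + 1)) (fstPowMulSndPow 𝕜 n j)).trans ?_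
        calc ‖P.monomialCoeff (n + 1) (j + 1)‖ * ‖fstPowMulSndPow 𝕜 n j‖
            ≤ ‖P.monomialCoeff (n + 1) (j + 1)‖ * 1 := by
              gcongr; exact norm_fstPowMulSndPow_le n j
          _ ≤ _ := by rw [mul_one]; exact P.norm_monomialCoeff_le _ _
    _ ≤ 2 ^ (n + 1) * ‖P (n + 1)‖ := by
        rw [← sum_mul]
        gcongr
        have h := Nat.sum_range_choose (n + 1)
        rw [sum_range_succ'] at h
        exact_mod_cast h ▸ Nat.le_add_right _ _

theorem radius_div_two_le_radius_divFst : P.radius / 2 ≤ P.divFst.radius := by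
  refine ENNReal.le_of_forall_pos_nnreal_lt fun r hr hlt => ?_
  have h2r : ((2 * r : ℝ≥0) : ℝ≥0∞) < P.radius := by
    rw [ENNReal.coe_mul, ENNReal.coe_ofNat, mul_comm]
    exact ENNReal.mul_lt_of_lt_div hlt
  obtain ⟨C, -, hC⟩ := P.norm_mul_pow_le_of_lt_radius h2r
  refine P.divFst.le_radius_of_bound (C / r) fun n => ?_
  rw [le_div_iff₀ (by exact_mod_cast hr)]
  calc ‖P.divFst n‖ * (r : ℝ) ^ n * r
      ≤ 2 ^ (n + 1) * ‖P (n + 1)‖ * (r : ℝ) ^ n * r := by gcongr; exact P.norm_divFst_le n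
    _ = ‖P (n + 1)‖ * ((2 * r : ℝ≥0) : ℝ) ^ (n + 1) := by push_cast; ring
    _ ≤ C := hC (n + 1)

end FormalMultilinearSeries

theorem AnalyticAt.exists_eventuallyEq_fst_mul [CompleteSpace 𝕜] {f : 𝕜 × 𝕜 → 𝕜} {b : 𝕜}
    (hf : AnalyticAt 𝕜 f (0, b)) (hzero : ∀ᶠ y in 𝓝 b, f (0, y) = 0) :
    ∃ g : 𝕜 × 𝕜 → 𝕜, AnalyticAt 𝕜 g (0, b) ∧ f =ᶠ[𝓝 (0, b)] fun p => p.1 * g p := by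
  obtain ⟨P, hP⟩ := hf
  set Q := P.divFst
  have hQ : HasFPowerSeriesAt Q.sum Q 0 :=
    (Q.hasFPowerSeriesOnBall ((ENNReal.div_pos hP.radius_pos.ne' ENNReal.ofNat_ne_top).trans_le
      P.radius_div_two_le_radius_divFst)).hasFPowerSeriesAt
  have hshift : Tendsto (fun p : 𝕜 × 𝕜 => p - (0, b)) (𝓝 (0, b)) (𝓝 0) :=
    (continuous_sub_right _).tendsto' _ _ (sub_self _)
  have hvert : Tendsto (fun p : 𝕜 × 𝕜 => ((0 : 𝕜), p.2 - b)) (𝓝 (0, b)) (𝓝 0) :=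
    (continuous_const.prodMk (continuous_snd.sub continuous_const)).tendsto' _ _ (by simp)
  refine ⟨fun p => Q.sum (p - (0, b)), ?_, ?_⟩
  · refine AnalyticAt.comp (g := Q.sum) (f := fun p => p - ((0 : 𝕜), b)) ?_
      (analyticAt_id.sub analyticAt_const)
    simpa using hQ.analyticAt
  have hvanish :
      ∀ᶠ p in 𝓝 ((0 : 𝕜), b), HasSum (fun n => P n fun _ => ((0 : 𝕜), p.2 - b)) 0 := by
    filter_upwards [hvert.eventually hP.eventually_hasSum,
      continuous_snd.continuousAt.eventually hzero] with p hp hp0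
    simpa [hp0] using hp
  filter_upwards [hP.eventually_hasSum_sub, hvanish, hshift.eventually hQ.eventually_hasSum]
    with p hf hf0 hg
  -- Subtracting the series of `f (0, ·)`, which sums to `0`, leaves `p.1` times the series `Q`.
  have hdiff : HasSum (fun n => (P n fun _ => p - (0, b)) - P n fun _ => ((0 : 𝕜), p.2 - b))
      (f p) := by simpa using hf.sub hf0
  rw [← hasSum_nat_add_iff' 1] at hdiff
  have hterm (n : ℕ) :
      ((P (n + 1) fun _ => p - (0, b)) - P (n + 1) fun _ => ((0 : 𝕜), p.2 - b)) =
        p.1 * Q n fun _ => p - (0, b) := by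
    rw [P.apply_diag_succ_eq_add_fst_mul_divFst]; simp [Q]
  have hconst : (P 0 fun _ => p - (0, b)) = P 0 fun _ => ((0 : 𝕜), p.2 - b) :=
    congrArg (P 0) (Subsingleton.elim _ _)
  rw [sum_range_one, hconst, sub_self, sub_zero] at hdiff
  rw [zero_add] at hg
  exact hdiff.unique (by simpa only [hterm] using hg.mul_left p.1)

end SeriesOnPlane

theorem Dense.eventuallyEq_of_continuousAt {X Y : Type*} [TopologicalSpace X]
    [TopologicalSpace Y] [T2Space Y] {s : Set X} (hs : Dense s) {F K : X → Y} {x : X}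
    (hF : ∀ᶠ y in 𝓝 x, ContinuousAt F y) (hK : ∀ᶠ y in 𝓝 x, ContinuousAt K y)
    (hFK : ∀ᶠ y in 𝓝 x, y ∈ s → F y = K y) : F =ᶠ[𝓝 x] K := by
  obtain ⟨t, ht, hto, hxt⟩ := eventually_nhds_iff.1 (hF.and (hK.and hFK))
  refine eventually_nhds_iff.2 ⟨t, fun y hy => ?_, hto, hxt⟩
  exact Set.EqOn.of_subset_closure (s := t ∩ s) (fun z hz => (ht z hz.1).2.2 hz.2)
    (fun z hz => (ht z hz).1.continuousWithinAt) (fun z hz => (ht z hz).2.1.continuousWithinAt)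
    Set.inter_subset_left (hs.open_subset_closure_inter hto) hy

theorem eventually_eq_of_eventually_hasDerivAt_zero {𝕜 E : Type*} [RCLike 𝕜]
    [NormedAddCommGroup E] [NormedSpace 𝕜 E] {φ : 𝕜 → E} {b : 𝕜}
    (h : ∀ᶠ y in 𝓝 b, HasDerivAt φ 0 y) : ∀ᶠ y in 𝓝 b, φ y = φ b := by
  obtain ⟨s, hs, hso, hbs⟩ := eventually_nhds_iff.1 h
  have hopen := hso.isOpen_inter_preimage_of_deriv_eq_zero
    (fun y hy => (hs y hy).differentiableAt.differentiableWithinAt)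
    (fun y hy => (hs y hy).deriv) {φ b}
  filter_upwards [hopen.mem_nhds ⟨hbs, rfl⟩] with y hy using hy.2

section PartialDerivatives

variable {𝕜 : Type*} [NontriviallyNormedField 𝕜]

theorem dense_setOf_fst_ne_zero_s14 : Dense {p : 𝕜 × 𝕜 | p.1 ≠ 0} :=
  (dense_compl_singleton (0 : 𝕜)).preimage isOpenMap_fst

theorem fderiv_comp_fst_apply {φ : 𝕜 → 𝕜} {q : 𝕜 × 𝕜} (hφ : DifferentiableAt 𝕜 φ q.1)
    (v : 𝕜 × 𝕜) : fderiv 𝕜 (fun p => φ p.1) q v = deriv φ q.1 * v.1 := by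
  have h : HasFDerivAt (fun p : 𝕜 × 𝕜 => φ p.1)
      (deriv φ q.1 • ContinuousLinearMap.fst 𝕜 𝕜 𝕜) q :=
    hφ.hasDerivAt.comp_hasFDerivAt q (hasFDerivAt_fst (p := q))
  simp [h.fderiv]

theorem fderiv_comp_fst_mul_apply_zero_one {φ : 𝕜 → 𝕜} {g : 𝕜 × 𝕜 → 𝕜} {q : 𝕜 × 𝕜}
    (hφ : DifferentiableAt 𝕜 φ q.1) (hg : DifferentiableAt 𝕜 g q) :
    fderiv 𝕜 (fun p => φ p.1 * g p) q (0, 1) = φ q.1 * fderiv 𝕜 g q (0, 1) := by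
  have hφ' : DifferentiableAt 𝕜 (fun p : 𝕜 × 𝕜 => φ p.1) q := hφ.comp q differentiableAt_fst
  rw [fderiv_fun_mul hφ' hg]
  simp [fderiv_comp_fst_apply hφ]

theorem hasDerivAt_slice_snd {f : 𝕜 × 𝕜 → 𝕜} {a y : 𝕜} (hf : DifferentiableAt 𝕜 f (a, y)) :
    HasDerivAt (fun t => f (a, t)) (fderiv 𝕜 f (a, y) (0, 1)) y :=
  hf.hasFDerivAt.comp_hasDerivAt y ((hasDerivAt_const y a).prodMk (hasDerivAt_id y))

theorem AnalyticAt.continuousAt_fderiv_apply [CompleteSpace 𝕜] {f : 𝕜 × 𝕜 → 𝕜} {q : 𝕜 × 𝕜}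
    (hf : AnalyticAt 𝕜 f q) (v : 𝕜 × 𝕜) : ContinuousAt (fun p => fderiv 𝕜 f p v) q :=
  hf.fderiv.continuousAt.clm_apply continuousAt_const

end PartialDerivatives

section NormalForm

variable {𝕜 : Type*} [RCLike 𝕜] {f h u : 𝕜 × 𝕜 → 𝕜} {b : 𝕜} {m : ℕ}

theorem AnalyticAt.exists_eventuallyEq_fst_mul_of_fderiv_eq {k : ℕ} (hf : AnalyticAt 𝕜 f (0, b))
    (hh : ∀ᶠ p in 𝓝 (0, b), ContinuousAt h p)
    (hd : ∀ᶠ p in 𝓝 (0, b), fderiv 𝕜 f p (0, 1) = p.1 ^ (k + 1) * h p)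
    (hb : ∀ᶠ x in 𝓝 0, f (x, b) = 0) :
    ∃ g : 𝕜 × 𝕜 → 𝕜, AnalyticAt 𝕜 g (0, b) ∧ (f =ᶠ[𝓝 (0, b)] fun p => p.1 * g p) ∧
      (∀ᶠ p in 𝓝 (0, b), fderiv 𝕜 g p (0, 1) = p.1 ^ k * h p) ∧ ∀ᶠ x in 𝓝 0, g (x, b) = 0 := by
  have hline : Tendsto (fun x : 𝕜 => (x, b)) (𝓝 0) (𝓝 (0, b)) :=
    (continuous_id.prodMk continuous_const).tendsto' _ _ rfl
  have hvert : Tendsto (fun y : 𝕜 => ((0 : 𝕜), y)) (𝓝 b) (𝓝 (0, b)) :=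
    (continuous_const.prodMk continuous_id).tendsto' _ _ rfl
  have hax : ∀ᶠ y in 𝓝 b, f (0, y) = 0 := by
    have hconst : ∀ᶠ y in 𝓝 b, f (0, y) = f (0, b) := by
      refine eventually_eq_of_eventually_hasDerivAt_zero (φ := fun y => f (0, y)) ?_
      filter_upwards [hvert.eventually hf.eventually_analyticAt, hvert.eventually hd]
        with y hya hyd
      simpa [hyd] using hasDerivAt_slice_snd hya.differentiableAt
    filter_upwards [hconst] with y hy
    rw [hy, hb.self_of_nhds]
  obtain ⟨g, hg, hfg⟩ := hf.exists_eventuallyEq_fst_mul hax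
  refine ⟨g, hg, hfg, ?_, ?_⟩
  · refine dense_setOf_fst_ne_zero_s14.eventuallyEq_of_continuousAt ?_ ?_ ?_
    · filter_upwards [hg.eventually_analyticAt] with p hp using hp.continuousAt_fderiv_apply _
    · filter_upwards [hh] with p hp using (continuousAt_fst.pow k).mul hp
    · filter_upwards [hfg.eventuallyEq_nhds, hd, hg.eventually_analyticAt] with p hfgp hdp hgp hp0
      have hprod : fderiv 𝕜 f p (0, 1) = p.1 * fderiv 𝕜 g p (0, 1) := by
        rw [hfgp.fderiv_eq]
        exact fderiv_comp_fst_mul_apply_zero_one (φ := id) differentiableAt_id hgp.differentiableAt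
      refine mul_left_cancel₀ hp0 ?_
      rw [← hprod, hdp]
      ring
  · refine (dense_compl_singleton (0 : 𝕜)).eventuallyEq_of_continuousAt (F := fun x => g (x, b))
      (K := fun _ => 0) ?_ (Eventually.of_forall fun _ => continuousAt_const) ?_
    · filter_upwards [hline.eventually hg.eventually_analyticAt] with x hx
      exact hx.continuousAt.comp (f := fun x : 𝕜 => (x, b)) (by fun_prop)
    · filter_upwards [hline.eventually hfg, hb] with x hfgx hbx hx0
      exact (mul_eq_zero.1 (hfgx.symm.trans hbx)).resolve_left hx0

theorem AnalyticAt.exists_eventuallyEq_fst_pow_mul (k : ℕ) (hf : AnalyticAt 𝕜 f (0, b))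
    (hh : ∀ᶠ p in 𝓝 (0, b), ContinuousAt h p)
    (hd : ∀ᶠ p in 𝓝 (0, b), fderiv 𝕜 f p (0, 1) = p.1 ^ k * h p)
    (hb : ∀ᶠ x in 𝓝 0, f (x, b) = 0) :
    ∃ g : 𝕜 × 𝕜 → 𝕜, AnalyticAt 𝕜 g (0, b) ∧ (f =ᶠ[𝓝 (0, b)] fun p => p.1 ^ k * g p) ∧
      (∀ᶠ p in 𝓝 (0, b), fderiv 𝕜 g p (0, 1) = h p) ∧ ∀ᶠ x in 𝓝 0, g (x, b) = 0 := by
  induction k generalizing f with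
  | zero => exact ⟨f, hf, by simp, by simpa using hd, hb⟩
  | succ k ih =>
    obtain ⟨g₁, hg₁, hfg₁, hd₁, hb₁⟩ := hf.exists_eventuallyEq_fst_mul_of_fderiv_eq hh hd hb
    obtain ⟨g, hg, hg₁g, hd', hb'⟩ := ih hg₁ hd₁ hb₁
    refine ⟨g, hg, ?_, hd', hb'⟩
    filter_upwards [hfg₁, hg₁g] with p hp₁ hp₂
    rw [hp₁, hp₂]
    ring

theorem AnalyticAt.exists_eventuallyEq_add_fst_pow_mul (hu : AnalyticAt 𝕜 u (0, b))
    (hh : ∀ᶠ p in 𝓝 (0, b), ContinuousAt h p)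
    (hd : ∀ᶠ p in 𝓝 (0, b), fderiv 𝕜 u p (0, 1) = p.1 ^ m * h p) :
    ∃ G : 𝕜 × 𝕜 → 𝕜, AnalyticAt 𝕜 G (0, b) ∧ G (0, b) = 0 ∧
      (∀ᶠ p in 𝓝 (0, b), fderiv 𝕜 G p (0, 1) = h p) ∧
      ∀ᶠ p in 𝓝 (0, b), u p = u (p.1, b) + p.1 ^ m * G p := by
  have hslice : ∀ᶠ p in 𝓝 ((0 : 𝕜), b), AnalyticAt 𝕜 (fun x => u (x, b)) p.1 := by
    have hproj : Tendsto (fun p : 𝕜 × 𝕜 => (p.1, b)) (𝓝 (0, b)) (𝓝 (0, b)) :=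
      (continuous_fst.prodMk continuous_const).tendsto' _ _ rfl
    filter_upwards [hproj.eventually hu.eventually_analyticAt] with p hp
    exact hp.comp (f := fun x : 𝕜 => (x, b)) (analyticAt_id.prod analyticAt_const)
  have hslice₀ : AnalyticAt 𝕜 (fun p : 𝕜 × 𝕜 => u (p.1, b)) (0, b) :=
    hslice.self_of_nhds.comp analyticAt_fst
  have hdiff : ∀ᶠ p in 𝓝 (0, b),
      fderiv 𝕜 (fun p => u p - u (p.1, b)) p (0, 1) = p.1 ^ m * h p := by
    filter_upwards [hu.eventually_analyticAt, hslice, hd] with p hup hsp hdp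
    have hsp' : DifferentiableAt 𝕜 (fun p : 𝕜 × 𝕜 => u (p.1, b)) p :=
      hsp.differentiableAt.comp p differentiableAt_fst
    rw [fderiv_fun_sub hup.differentiableAt hsp', _root_.sub_apply, hdp,
      fderiv_comp_fst_apply (φ := fun x => u (x, b)) hsp.differentiableAt]
    simp
  obtain ⟨G, hG, hFG, hGd, hGb⟩ := AnalyticAt.exists_eventuallyEq_fst_pow_mul
    (f := fun p => u p - u (p.1, b)) m (hu.sub hslice₀) hh hdiff (.of_forall fun _ => sub_self _)
  refine ⟨G, hG, hGb.self_of_nhds, hGd, ?_⟩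
  filter_upwards [hFG] with p hp
  rw [← hp, add_sub_cancel]

theorem jacobian_comp_fst_comp_fst_mul {ψ χ : 𝕜 → 𝕜} {G : 𝕜 × 𝕜 → 𝕜} {q : 𝕜 × 𝕜}
    (hψ : DifferentiableAt 𝕜 ψ q.1) (hχ : DifferentiableAt 𝕜 χ q.1)
    (hG : DifferentiableAt 𝕜 G q) :
    fderiv 𝕜 (fun p => ψ p.1) q (1, 0) * fderiv 𝕜 (fun p => χ p.1 * G p) q (0, 1) -
        fderiv 𝕜 (fun p => ψ p.1) q (0, 1) * fderiv 𝕜 (fun p => χ p.1 * G p) q (1, 0) =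
      deriv ψ q.1 * (χ q.1 * fderiv 𝕜 G q (0, 1)) := by
  simp [fderiv_comp_fst_apply hψ, fderiv_comp_fst_mul_apply_zero_one hχ hG]

theorem AnalyticAt.exists_eventually_normalForm (hu : AnalyticAt 𝕜 u (0, b)) (hu0 : u (0, b) ≠ 0)
    (hh : ∀ᶠ p in 𝓝 (0, b), ContinuousAt h p) (hhb : h (0, b) ≠ 0)
    (hd : ∀ᶠ p in 𝓝 (0, b), fderiv 𝕜 u p (0, 1) = p.1 ^ m * h p) :
    ∃ z₁ z₂ e : 𝕜 × 𝕜 → 𝕜, z₁ (0, b) = 0 ∧ z₂ (0, b) = 0 ∧ ∀ᶠ q in 𝓝 (0, b),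
      AnalyticAt 𝕜 z₁ q ∧ AnalyticAt 𝕜 z₂ q ∧ AnalyticAt 𝕜 e q ∧ e q ≠ 0 ∧ z₁ q = q.1 * e q ∧
      fderiv 𝕜 z₁ q (1, 0) * fderiv 𝕜 z₂ q (0, 1) -
        fderiv 𝕜 z₁ q (0, 1) * fderiv 𝕜 z₂ q (1, 0) ≠ 0 ∧
      q.1 * u q = z₁ q * (1 + z₁ q ^ m * z₂ q) := by
  obtain ⟨G, hG, hG0, hGd, huG⟩ := hu.exists_eventuallyEq_add_fst_pow_mul hh hd
  have hline : Tendsto (fun x : 𝕜 => (x, b)) (𝓝 0) (𝓝 (0, b)) :=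
    (continuous_id.prodMk continuous_const).tendsto' _ _ rfl
  have hφ : ∀ᶠ x in 𝓝 0, AnalyticAt 𝕜 (fun x => u (x, b)) x := by
    filter_upwards [hline.eventually hu.eventually_analyticAt] with x hx
    exact hx.comp (f := fun x : 𝕜 => (x, b)) (analyticAt_id.prod analyticAt_const)
  have hψ0 : deriv (fun x => x * u (x, b)) 0 = u (0, b) := by
    rw [deriv_fun_mul (c := fun x => x) differentiableAt_id hφ.self_of_nhds.differentiableAt]
    simp
  have hslice : ∀ᶠ x in 𝓝 0, AnalyticAt 𝕜 (fun x => u (x, b)) x ∧ u (x, b) ≠ 0 ∧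
      deriv (fun x => x * u (x, b)) x ≠ 0 :=
    hφ.and (hφ.self_of_nhds.continuousAt.eventually_ne hu0 |>.and <|
      (analyticAt_id.mul hφ.self_of_nhds).deriv.continuousAt.eventually_ne (hψ0 ▸ hu0))
  refine ⟨fun q => q.1 * u (q.1, b), fun q => (u (q.1, b) ^ (m + 1))⁻¹ * G q,
    fun q => u (q.1, b), by simp, by simp [hG0], ?_⟩
  filter_upwards [(continuous_fst.tendsto' ((0 : 𝕜), b) 0 rfl).eventually hslice,
    hG.eventually_analyticAt, hGd, huG, hh.self_of_nhds.eventually_ne hhb]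
    with q ⟨hφq, hφq0, hψq⟩ hGq hGdq huq hhq
  have hχq : AnalyticAt 𝕜 (fun x => (u (x, b) ^ (m + 1))⁻¹) q.1 :=
    (hφq.pow (m + 1)).inv (pow_ne_zero _ hφq0)
  refine ⟨analyticAt_fst.mul (hφq.comp analyticAt_fst), (hχq.comp analyticAt_fst).mul hGq,
    hφq.comp analyticAt_fst, hφq0, rfl, ?_, ?_⟩
  · have hJ := jacobian_comp_fst_comp_fst_mul (ψ := fun x => x * u (x, b))
      (analyticAt_id.mul hφq).differentiableAt hχq.differentiableAt hGq.differentiableAt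
    beta_reduce at hJ
    rw [hJ, hGdq]
    exact mul_ne_zero hψq (mul_ne_zero (inv_ne_zero (pow_ne_zero _ hφq0)) hhq)
  · rw [huq]
    field_simp
    ring

end NormalForm

/-- **Normal form along a common leaf.**
Let `u` be analytic and nowhere vanishing on the bidisc `D = Δ_ε × Δ_ε` with
`∂u/∂v₂ = v₁^m·h` where `h` is analytic on `D` and `h(0,·)` is not identically zero.
Then near some point `(0,b)` of the leaf `{v₁ = 0}` there is a holomorphic coordinate
chart `(z₁,z₂)` centered at `(0,b)` with `{v₁ = 0} = {z₁ = 0}` and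
`v₁·u(v₁,v₂) = z₁·(1 + z₁^m·z₂)`. -/
theorem normal_form_along_common_leaf
    (ε : ℝ) (hε : 0 < ε) (m : ℕ)
    (u h : ℂ × ℂ → ℂ)
    (hu : AnalyticOnNhd ℂ u {p : ℂ × ℂ | ‖p.1‖ < ε ∧ ‖p.2‖ < ε})
    (hu0 : ∀ p : ℂ × ℂ, ‖p.1‖ < ε → ‖p.2‖ < ε → u p ≠ 0)
    (hh : AnalyticOnNhd ℂ h {p : ℂ × ℂ | ‖p.1‖ < ε ∧ ‖p.2‖ < ε})
    (hder : ∀ p : ℂ × ℂ, ‖p.1‖ < ε → ‖p.2‖ < ε →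
      fderiv ℂ u p (0, 1) = p.1 ^ m * h p)
    (hh0 : ∃ y : ℂ, ‖y‖ < ε ∧ h (0, y) ≠ 0) :
    ∃ b : ℂ, ‖b‖ < ε ∧
    ∃ U : Set (ℂ × ℂ), IsOpen U ∧ ((0 : ℂ), b) ∈ U ∧
      U ⊆ {p : ℂ × ℂ | ‖p.1‖ < ε ∧ ‖p.2‖ < ε} ∧
    ∃ z₁ z₂ : ℂ × ℂ → ℂ,
      AnalyticOnNhd ℂ z₁ U ∧ AnalyticOnNhd ℂ z₂ U ∧
      (z₁ (0, b) = 0 ∧ z₂ (0, b) = 0) ∧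
      (∀ q ∈ U, fderiv ℂ z₁ q (1, 0) * fderiv ℂ z₂ q (0, 1) -
        fderiv ℂ z₁ q (0, 1) * fderiv ℂ z₂ q (1, 0) ≠ 0) ∧
      (∃ e : ℂ × ℂ → ℂ, AnalyticOnNhd ℂ e U ∧ (∀ q ∈ U, e q ≠ 0) ∧
        ∀ q ∈ U, z₁ q = q.1 * e q) ∧
      (∀ q ∈ U, q.1 * u q = z₁ q * (1 + (z₁ q) ^ m * z₂ q)) := by
  obtain ⟨b, hb, hhb⟩ := hh0
  have hD : ∀ᶠ p in 𝓝 ((0 : ℂ), b), ‖p.1‖ < ε ∧ ‖p.2‖ < ε :=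
    ((isOpen_lt (continuous_norm.comp continuous_fst) continuous_const).inter
      (isOpen_lt (continuous_norm.comp continuous_snd) continuous_const)).mem_nhds
      ⟨by simpa using hε, hb⟩
  obtain ⟨z₁, z₂, e, hz₁0, hz₂0, hchart⟩ := (hu _ hD.self_of_nhds).exists_eventually_normalForm
    (hu0 _ (by simpa using hε) hb)
    (by filter_upwards [hD] with p hp using (hh p hp).continuousAt) hhb
    (by filter_upwards [hD] with p hp using hder p hp.1 hp.2)
  obtain ⟨U, hU, hUo, hbU⟩ := eventually_nhds_iff.1 (hD.and hchart)
  choose hUD hz₁ hz₂ he he0 hz₁e hJ hid using hU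
  exact ⟨b, hb, U, hUo, hbU, hUD, z₁, z₂, hz₁, hz₂, ⟨hz₁0, hz₂0⟩, hJ, ⟨e, he, he0, hz₁e⟩, hid⟩
end

section
/- Let r, s > 0 and let g be an analytic nowhere-vanishing function on the polydisc D = Δ_r × Δ_s ⊆ ℂ². Suppose there exist a nonempty open subset V ⊆ D and one-variable analytic functions f₁ and f₂ such that g(z₁,z₂) = f₁(z₁)·f₂(z₂) for all (z₁,z₂) ∈ V. Then there exist analytic functions f̂₁ on Δ_r and f̂₂ on Δ_s such that g(z₁,z₂) = f̂₁(z₁)·f̂₂(z₂) for all (z₁,z₂) ∈ D. -/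
/-! The function `G p = g(p.1, b) · g(a, p.2)` built from the two slices of `g` through a base
point `(a, b) ∈ V` agrees with `g p · g(a, b)` near `(a, b)`, since both equal
`f₁(p.1) f₂(p.2) f₁(a) f₂(b)` there. Both sides are analytic on the connected polydisc, so by the
identity theorem they agree everywhere, and dividing by `g(a, b) ≠ 0` gives the decomposition. -/

open Filter Metric Set Topology

theorem mul_eq_mul_slices_of_eq_mul {α β R : Type*} [CommMonoid R] {g : α × β → R}
    {f₁ : α → R} {f₂ : β → R} {a x : α} {b y : β}
    (hxy : g (x, y) = f₁ x * f₂ y) (hab : g (a, b) = f₁ a * f₂ b)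
    (hxb : g (x, b) = f₁ x * f₂ b) (hay : g (a, y) = f₁ a * f₂ y) :
    g (x, y) * g (a, b) = g (x, b) * g (a, y) := by
  rw [hxy, hab, hxb, hay]
  ac_rfl

theorem eventuallyEq_mul_slices_of_eqOn_mul {X Y R : Type*} [TopologicalSpace X]
    [TopologicalSpace Y] [CommMonoid R] {g : X × Y → R} {f₁ : X → R} {f₂ : Y → R}
    {V : Set (X × Y)} (hV : IsOpen V) (hprod : ∀ p ∈ V, g p = f₁ p.1 * f₂ p.2)
    {a : X} {b : Y} (hab : (a, b) ∈ V) :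
    (fun p => g p * g (a, b)) =ᶠ[𝓝 (a, b)] fun p => g (p.1, b) * g (a, p.2) := by
  obtain ⟨U₁, U₂, hU₁, hU₂, haU, hbU, hUV⟩ := isOpen_prod_iff.1 hV a b hab
  filter_upwards [prod_mem_nhds (hU₁.mem_nhds haU) (hU₂.mem_nhds hbU)] with p ⟨hp₁, hp₂⟩
  exact mul_eq_mul_slices_of_eq_mul (hprod _ (hUV ⟨hp₁, hp₂⟩)) (hprod _ hab)
    (hprod _ (hUV ⟨hp₁, hbU⟩)) (hprod _ (hUV ⟨haU, hp₂⟩))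

section Analytic

variable {𝕜 E₁ E₂ : Type*} [NontriviallyNormedField 𝕜] [NormedAddCommGroup E₁]
  [NormedSpace 𝕜 E₁] [NormedAddCommGroup E₂] [NormedSpace 𝕜 E₂]
  {g : E₁ × E₂ → 𝕜} {U₁ : Set E₁} {U₂ : Set E₂}

theorem AnalyticOnNhd.comp_prodMk_right (hg : AnalyticOnNhd 𝕜 g (U₁ ×ˢ U₂)) {b : E₂}
    (hb : b ∈ U₂) : AnalyticOnNhd 𝕜 (fun x => g (x, b)) U₁ := fun x hx =>
  (hg (x, b) ⟨hx, hb⟩).comp (f := (·, b)) (analyticAt_id.prod analyticAt_const)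

theorem AnalyticOnNhd.comp_prodMk_left (hg : AnalyticOnNhd 𝕜 g (U₁ ×ˢ U₂)) {a : E₁}
    (ha : a ∈ U₁) : AnalyticOnNhd 𝕜 (fun y => g (a, y)) U₂ := fun y hy =>
  (hg (a, y) ⟨ha, hy⟩).comp (f := (a, ·)) (analyticAt_const.prod analyticAt_id)

theorem AnalyticOnNhd.eqOn_mul_slices_of_eventuallyEq (hg : AnalyticOnNhd 𝕜 g (U₁ ×ˢ U₂))
    (hU₁ : IsPreconnected U₁) (hU₂ : IsPreconnected U₂) {a : E₁} {b : E₂} (ha : a ∈ U₁)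
    (hb : b ∈ U₂)
    (hloc : (fun p => g p * g (a, b)) =ᶠ[𝓝 (a, b)] fun p => g (p.1, b) * g (a, p.2)) :
    EqOn (fun p => g p * g (a, b)) (fun p => g (p.1, b) * g (a, p.2)) (U₁ ×ˢ U₂) := by
  have hslices : AnalyticOnNhd 𝕜 (fun p : E₁ × E₂ => g (p.1, b) * g (a, p.2)) (U₁ ×ˢ U₂) :=
    fun p hp => ((hg.comp_prodMk_right hb p.1 hp.1).comp analyticAt_fst).mul
      ((hg.comp_prodMk_left ha p.2 hp.2).comp analyticAt_snd)
  exact (hg.mul analyticOnNhd_const).eqOn_of_preconnected_of_eventuallyEq hslices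
    (hU₁.prod hU₂) ⟨ha, hb⟩ hloc

theorem AnalyticOnNhd.exists_eqOn_mul_of_eqOn_mul (hg : AnalyticOnNhd 𝕜 g (U₁ ×ˢ U₂))
    (hU₁ : IsPreconnected U₁) (hU₂ : IsPreconnected U₂) (hg0 : ∀ p ∈ U₁ ×ˢ U₂, g p ≠ 0)
    {V : Set (E₁ × E₂)} (hV : IsOpen V) (hVne : V.Nonempty) (hVU : V ⊆ U₁ ×ˢ U₂)
    {f₁ : E₁ → 𝕜} {f₂ : E₂ → 𝕜} (hprod : ∀ p ∈ V, g p = f₁ p.1 * f₂ p.2) :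
    ∃ fh₁ : E₁ → 𝕜, ∃ fh₂ : E₂ → 𝕜, AnalyticOnNhd 𝕜 fh₁ U₁ ∧ AnalyticOnNhd 𝕜 fh₂ U₂ ∧
      ∀ p ∈ U₁ ×ˢ U₂, g p = fh₁ p.1 * fh₂ p.2 := by
  obtain ⟨⟨a, b⟩, hab⟩ := hVne
  obtain ⟨ha, hb⟩ : a ∈ U₁ ∧ b ∈ U₂ := hVU hab
  have hEq := hg.eqOn_mul_slices_of_eventuallyEq hU₁ hU₂ ha hb
    (eventuallyEq_mul_slices_of_eqOn_mul hV hprod hab)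
  refine ⟨fun x => g (x, b), fun y => g (a, y) * (g (a, b))⁻¹, hg.comp_prodMk_right hb,
    (hg.comp_prodMk_left ha).mul analyticOnNhd_const, fun p hp => ?_⟩
  have hcross : g p * g (a, b) = g (p.1, b) * g (a, p.2) := hEq hp
  change g p = g (p.1, b) * (g (a, p.2) * _)
  rw [← mul_assoc, ← hcross, mul_inv_cancel_right₀ (hg0 _ ⟨ha, hb⟩)]

end Analytic

theorem product_decomposition_propagates_general
    (r s : ℝ)
    (g : ℂ × ℂ → ℂ)
    (hg : AnalyticOnNhd ℂ g {p : ℂ × ℂ | ‖p.1‖ < r ∧ ‖p.2‖ < s})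
    (hg0 : ∀ p : ℂ × ℂ, ‖p.1‖ < r → ‖p.2‖ < s → g p ≠ 0)
    (hloc : ∃ V : Set (ℂ × ℂ), IsOpen V ∧ V.Nonempty ∧
      V ⊆ {p : ℂ × ℂ | ‖p.1‖ < r ∧ ‖p.2‖ < s} ∧
      ∃ f₁ f₂ : ℂ → ℂ,
        (∀ p ∈ V, AnalyticAt ℂ f₁ p.1) ∧
        (∀ p ∈ V, AnalyticAt ℂ f₂ p.2) ∧
        (∀ p ∈ V, g p = f₁ p.1 * f₂ p.2)) :
    ∃ fh₁ fh₂ : ℂ → ℂ,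
      AnalyticOnNhd ℂ fh₁ {z : ℂ | ‖z‖ < r} ∧
      AnalyticOnNhd ℂ fh₂ {z : ℂ | ‖z‖ < s} ∧
      ∀ p : ℂ × ℂ, ‖p.1‖ < r → ‖p.2‖ < s →
        g p = fh₁ p.1 * fh₂ p.2 := by
  obtain ⟨V, hV, hVne, hVD, f₁, f₂, -, -, hprod⟩ := hloc
  have hD : {p : ℂ × ℂ | ‖p.1‖ < r ∧ ‖p.2‖ < s} = ball (0 : ℂ) r ×ˢ ball (0 : ℂ) s := by
    ext p
    simp
  rw [hD] at hg hVD
  obtain ⟨fh₁, fh₂, hfh₁, hfh₂, hfh⟩ := hg.exists_eqOn_mul_of_eqOn_mul isPreconnected_ball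
    isPreconnected_ball (fun p hp => hg0 p (by simpa using hp.1) (by simpa using hp.2))
    hV hVne hVD hprod
  rw [ball_zero_eq] at hfh₁ hfh₂
  exact ⟨fh₁, fh₂, hfh₁, hfh₂, fun p hp₁ hp₂ => hfh p (by simp [hp₁, hp₂])⟩

/-- **Propagation of a product decomposition from an open subset to the polydisc.**
If `g` is analytic and nowhere vanishing on `Δ_r × Δ_s` and `g(z₁,z₂) = f₁(z₁)·f₂(z₂)`
on some nonempty open subset, then `g(z₁,z₂) = f̂₁(z₁)·f̂₂(z₂)` on the whole polydisc
for analytic functions `f̂₁` on `Δ_r` and `f̂₂` on `Δ_s`. -/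
theorem product_decomposition_propagates
    (r s : ℝ) (hr : 0 < r) (hs : 0 < s)
    (g : ℂ × ℂ → ℂ)
    (hg : AnalyticOnNhd ℂ g {p : ℂ × ℂ | ‖p.1‖ < r ∧ ‖p.2‖ < s})
    (hg0 : ∀ p : ℂ × ℂ, ‖p.1‖ < r → ‖p.2‖ < s → g p ≠ 0)
    (hloc : ∃ V : Set (ℂ × ℂ), IsOpen V ∧ V.Nonempty ∧
      V ⊆ {p : ℂ × ℂ | ‖p.1‖ < r ∧ ‖p.2‖ < s} ∧
      ∃ f₁ f₂ : ℂ → ℂ,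
        (∀ p ∈ V, AnalyticAt ℂ f₁ p.1) ∧
        (∀ p ∈ V, AnalyticAt ℂ f₂ p.2) ∧
        (∀ p ∈ V, g p = f₁ p.1 * f₂ p.2)) :
    ∃ fh₁ fh₂ : ℂ → ℂ,
      AnalyticOnNhd ℂ fh₁ {z : ℂ | ‖z‖ < r} ∧
      AnalyticOnNhd ℂ fh₂ {z : ℂ | ‖z‖ < s} ∧
      ∀ p : ℂ × ℂ, ‖p.1‖ < r → ‖p.2‖ < s →
        g p = fh₁ p.1 * fh₂ p.2 :=
  product_decomposition_propagates_general r s g hg hg0 hloc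
end

section
/- Let α ∈ ℂ with α ≠ 0. Then there do not exist an open neighborhood U ⊆ ℂ × Δ₁ of the point (0,0) and one-variable analytic functions f and h (defined on open sets containing {z₁ : (z₁,z₂) ∈ U} and {z₁(1+z₂) : (z₁,z₂) ∈ U} respectively) such that exp(α·Log(1+z₂)) = f(z₁)·h(z₁·(1+z₂)) for all (z₁,z₂) ∈ U, where Log denotes the principal branch of the logarithm. -/
open Complex Filter Topology

theorem hasDerivAt_exp_mul_log_one_add (α : ℂ) :
    HasDerivAt (fun z : ℂ => exp (α * log (1 + z))) α 0 := by
  have hlog : HasDerivAt (fun z : ℂ => log (1 + z)) 1 0 := by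
    simpa using ((hasDerivAt_id (0 : ℂ)).const_add 1).clog (by simp)
  simpa using (hlog.const_mul α).cexp

theorem not_eventually_exp_mul_log_one_add_eq {α : ℂ} (hα : α ≠ 0) (c : ℂ) :
    ¬ ∀ᶠ z in 𝓝 (0 : ℂ), exp (α * log (1 + z)) = c := fun hc =>
  hα <| (hasDerivAt_exp_mul_log_one_add α).unique <|
    (hasDerivAt_const (0 : ℂ) c).congr_of_eventuallyEq hc

/-- **Monodromy obstruction: no holomorphic closed decomposition along `{z₁ = 0}`.**
For `α ≠ 0`, there is no neighborhood `U ⊆ ℂ × Δ₁` of `(0,0)` and one-variable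
analytic functions `f`, `h` with
`exp(α·Log(1+z₂)) = f(z₁)·h(z₁(1+z₂))` on `U`. -/
theorem no_closed_decomposition_of_monodromy_example
    (α : ℂ) (hα : α ≠ 0) :
    ¬ ∃ U : Set (ℂ × ℂ), IsOpen U ∧ ((0 : ℂ), (0 : ℂ)) ∈ U ∧
      U ⊆ {p : ℂ × ℂ | ‖p.2‖ < 1} ∧
      ∃ f h : ℂ → ℂ,
        (∀ p ∈ U, AnalyticAt ℂ f p.1) ∧
        (∀ p ∈ U, AnalyticAt ℂ h (p.1 * (1 + p.2))) ∧
        (∀ p ∈ U, Complex.exp (α * Complex.log (1 + p.2)) =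
          f p.1 * h (p.1 * (1 + p.2))) := by
  rintro ⟨U, hU, hU0, -, f, h, -, -, hfactor⟩
  have hslice : ∀ᶠ z in 𝓝 (0 : ℂ), ((0 : ℂ), z) ∈ U :=
    (Continuous.prodMk_right (0 : ℂ)).continuousAt.preimage_mem_nhds (hU.mem_nhds hU0)
  -- On the slice `z₁ = 0` the right-hand side is the constant `f 0 * h 0`.
  refine not_eventually_exp_mul_log_one_add_eq hα (f 0 * h 0) ?_
  filter_upwards [hslice] with z hz
  simpa using hfactor _ hz
end
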